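/- arXiv:1203.6794 — 7 statements merged into one kernel-verified Lean document; each statement's English description precedes it below -/
import Mathlib

section
/- Let L be a finite modular lattice that is not distributive. Then L contains a diamond sublattice whose top and bottom differ in rank by two; precisely, there exist elements a, e ∈ L and pairwise distinct elements b, c, d ∈ L such that b ⊓ c = b ⊓ d = c ⊓ d = a, b ⊔ c = b ⊔ d = c ⊔ d = e, and each of b, c, d covers a and is covered by e. -/
/-!
With `a = (x ⊓ y) ⊔ (y ⊓ z) ⊔ (z ⊓ x)` and `e = (x ⊔ y) ⊓ (y ⊔ z) ⊓ (z ⊔ x)`, modularity makes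
`x ⊓ (y ⊔ z) ⊔ (y ⊓ z)` and its two cyclic rotations meet pairwise in `a` and join pairwise to
`e`, while `a = e` would force `x ⊓ (y ⊔ z) = (x ⊓ y) ⊔ (x ⊓ z)`; so a failure of distributivity
gives a diamond (Birkhoff). To shrink it, take an atom `b'` of `[a, b]` and project it into
`[a, c]` and `[a, d]` as `(b' ⊔ d) ⊓ c` and `(b' ⊔ c) ⊓ d`. In a modular lattice `u ⊓ v ⋖ u` iff
`v ⋖ u ⊔ v`, so coverings transfer along these projections: the images are atoms as well, and
each middle element of the new diamond is covered by its top.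
-/

section Median

variable {L : Type*} [Lattice L]

def lowerMedian (x y z : L) : L := x ⊓ y ⊔ y ⊓ z ⊔ z ⊓ x

def upperMedian (x y z : L) : L := (x ⊔ y) ⊓ (y ⊔ z) ⊓ (z ⊔ x)

def diamondMid (x y z : L) : L := x ⊓ (y ⊔ z) ⊔ y ⊓ z

theorem lowerMedian_rotate (x y z : L) : lowerMedian y z x = lowerMedian x y z := by
  simp only [lowerMedian]
  ac_rfl

theorem upperMedian_rotate (x y z : L) : upperMedian y z x = upperMedian x y z :=
  lowerMedian_rotate (L := Lᵒᵈ) x y z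

theorem lowerMedian_le_upperMedian (x y z : L) : lowerMedian x y z ≤ upperMedian x y z := by
  simp only [lowerMedian, upperMedian, sup_le_iff, le_inf_iff]
  refine ⟨⟨⟨⟨?_, ?_⟩, ?_⟩, ⟨⟨?_, ?_⟩, ?_⟩⟩, ⟨⟨?_, ?_⟩, ?_⟩⟩
  all_goals first
    | exact inf_le_left.trans le_sup_left | exact inf_le_left.trans le_sup_right
    | exact inf_le_right.trans le_sup_left

theorem inf_upperMedian (x y z : L) : x ⊓ upperMedian x y z = x ⊓ (y ⊔ z) :=
  le_antisymm (inf_le_inf_left x (inf_le_left.trans inf_le_right))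
    (le_inf inf_le_left (le_inf (le_inf (inf_le_left.trans le_sup_left) inf_le_right)
      (inf_le_left.trans le_sup_right)))

end Median

section Modular

variable {L : Type*} [Lattice L] [IsModularLattice L]

theorem inf_lowerMedian (x y z : L) : x ⊓ lowerMedian x y z = x ⊓ y ⊔ x ⊓ z := by
  have hle : x ⊓ y ⊔ z ⊓ x ≤ x := sup_le inf_le_left inf_le_right
  calc x ⊓ lowerMedian x y z = (x ⊓ y ⊔ z ⊓ x ⊔ y ⊓ z) ⊓ x := by
        rw [lowerMedian, inf_comm, sup_right_comm]
    _ = x ⊓ y ⊔ z ⊓ x ⊔ y ⊓ z ⊓ x := sup_inf_assoc_of_le _ hle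
    _ = x ⊓ y ⊔ x ⊓ z := by
        have hyzx : y ⊓ z ⊓ x ≤ x ⊓ y := le_inf inf_le_right (inf_le_left.trans inf_le_left)
        rw [sup_eq_left.2 (le_sup_of_le_left hyzx), inf_comm z]

theorem diamondMid_eq (x y z : L) : diamondMid x y z = (x ⊔ y ⊓ z) ⊓ (y ⊔ z) := by
  rw [diamondMid, sup_comm x, sup_inf_assoc_of_le x (inf_le_sup : y ⊓ z ≤ y ⊔ z), sup_comm,
    inf_comm]

theorem sup_inf_sup_rotate (x y z : L) : (x ⊔ y ⊓ z) ⊓ (y ⊔ z ⊓ x) = lowerMedian x y z := by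
  have hx : x ⊓ (y ⊔ z ⊓ x) = z ⊓ x ⊔ y ⊓ x := by
    rw [inf_comm, sup_comm, sup_inf_assoc_of_le y inf_le_right]
  rw [sup_comm x, sup_inf_assoc_of_le x (inf_le_left.trans le_sup_left), hx, lowerMedian,
    inf_comm y x]
  ac_rfl

theorem diamondMid_inf_rotate (x y z : L) :
    diamondMid x y z ⊓ diamondMid y z x = lowerMedian x y z := by
  have hle : lowerMedian x y z ≤ (y ⊔ z) ⊓ (z ⊔ x) :=
    (lowerMedian_le_upperMedian x y z).trans
      (le_inf (inf_le_left.trans inf_le_right) inf_le_right)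
  rw [diamondMid_eq, diamondMid_eq, inf_inf_inf_comm, sup_inf_sup_rotate, inf_eq_left.2 hle]

theorem diamondMid_sup_rotate (x y z : L) :
    diamondMid x y z ⊔ diamondMid y z x = upperMedian x y z := by
  rw [diamondMid_eq, diamondMid_eq]
  -- `diamondMid_eq` is the order dual of the definition of `diamondMid`.
  exact diamondMid_inf_rotate (L := Lᵒᵈ) x y z

end Modular

section Diamond

variable {L : Type*} [Lattice L] {a e b c d : L}

structure IsDiamond (a e b c d : L) : Prop where
  ne_bc : b ≠ c
  ne_bd : b ≠ d
  ne_cd : c ≠ d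
  inf_bc : b ⊓ c = a
  inf_bd : b ⊓ d = a
  inf_cd : c ⊓ d = a
  sup_bc : b ⊔ c = e
  sup_bd : b ⊔ d = e
  sup_cd : c ⊔ d = e

theorem IsDiamond.of_ne (hae : a ≠ e) (hbc : b ⊓ c = a) (hbd : b ⊓ d = a) (hcd : c ⊓ d = a)
    (hbc' : b ⊔ c = e) (hbd' : b ⊔ d = e) (hcd' : c ⊔ d = e) : IsDiamond a e b c d where
  ne_bc h := hae <| by rw [← hbc, ← hbc', h, inf_idem, sup_idem]
  ne_bd h := hae <| by rw [← hbd, ← hbd', h, inf_idem, sup_idem]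
  ne_cd h := hae <| by rw [← hcd, ← hcd', h, inf_idem, sup_idem]
  inf_bc := hbc
  inf_bd := hbd
  inf_cd := hcd
  sup_bc := hbc'
  sup_bd := hbd'
  sup_cd := hcd'

theorem IsDiamond.bot_lt (h : IsDiamond a e b c d) : a < b := by
  refine (h.inf_bc ▸ inf_le_left : a ≤ b).lt_of_ne fun hab => h.ne_cd ?_
  have hc : b ⊔ c = c := sup_eq_right.2 (inf_eq_left.1 (h.inf_bc.trans hab))
  have hd : b ⊔ d = d := sup_eq_right.2 (inf_eq_left.1 (h.inf_bd.trans hab))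
  rw [← hc, ← hd, h.sup_bc, h.sup_bd]

theorem inf_eq_of_inf_eq_of_le {b' c' : L} (h : b ⊓ c = a) (hb : b' ≤ b) (hc : c' ≤ c)
    (hab : a ≤ b') (hac : a ≤ c') : b' ⊓ c' = a :=
  le_antisymm (h ▸ inf_le_inf hb hc) (le_inf hab hac)

variable [IsModularLattice L]

theorem isDiamond_diamondMid {x y z : L} (h : x ⊓ (y ⊔ z) ≠ x ⊓ y ⊔ x ⊓ z) :
    IsDiamond (lowerMedian x y z) (upperMedian x y z)
      (diamondMid x y z) (diamondMid y z x) (diamondMid z x y) := by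
  refine .of_ne ?_ (diamondMid_inf_rotate x y z) ?_ ?_ (diamondMid_sup_rotate x y z) ?_ ?_
  · intro hae
    rw [← inf_upperMedian, ← hae, inf_lowerMedian] at h
    exact h rfl
  · rw [inf_comm, diamondMid_inf_rotate, lowerMedian_rotate, lowerMedian_rotate]
  · rw [diamondMid_inf_rotate, lowerMedian_rotate]
  · rw [sup_comm, diamondMid_sup_rotate, upperMedian_rotate, upperMedian_rotate]
  · rw [diamondMid_sup_rotate, upperMedian_rotate]

theorem IsDiamond.covBy_top (h : IsDiamond a e b c d) (hb : a ⋖ b) (hc : a ⋖ c) :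
    b ⋖ e ∧ c ⋖ e ∧ d ⋖ e := by
  refine ⟨?_, ?_, ?_⟩
  · rw [← h.sup_bc]; exact covBy_sup_of_inf_covBy_right (by rwa [h.inf_bc])
  · rw [← h.sup_bc]; exact covBy_sup_of_inf_covBy_left (by rwa [h.inf_bc])
  · rw [← h.sup_bd]; exact covBy_sup_of_inf_covBy_left (by rwa [h.inf_bd])

theorem inf_sup_eq_of_le_of_le_sup {c d q : L} (hd : d ≤ q) (hq : q ≤ c ⊔ d) :
    q ⊓ c ⊔ d = q := by
  rw [inf_sup_assoc_of_le c hd, inf_eq_left.2 hq]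

theorem covBy_sup_inf_of_covBy (hab : a ⋖ b) (hbd : b ⊓ d = a) (hcd : c ⊓ d = a)
    (hb : b ≤ c ⊔ d) : a ⋖ (b ⊔ d) ⊓ c := by
  have hsup : (b ⊔ d) ⊓ c ⊔ d = b ⊔ d :=
    inf_sup_eq_of_le_of_le_sup le_sup_right (sup_le hb le_sup_right)
  have had : a ≤ d := hcd ▸ inf_le_right
  have hinf : (b ⊔ d) ⊓ c ⊓ d = a := inf_eq_of_inf_eq_of_le hcd inf_le_right le_rfl
    (le_inf (had.trans le_sup_right) (hcd ▸ inf_le_left)) had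
  have hd : d ⋖ b ⊔ d := covBy_sup_of_inf_covBy_left (hbd ▸ hab)
  have hcov : (b ⊔ d) ⊓ c ⊓ d ⋖ (b ⊔ d) ⊓ c := inf_covBy_of_covBy_sup_right (by rwa [hsup])
  rwa [hinf] at hcov

theorem IsDiamond.exists_covBy [IsStronglyAtomic L] (h : IsDiamond a e b c d) :
    ∃ e' b' c' d', IsDiamond a e' b' c' d' ∧ a ⋖ b' ∧ a ⋖ c' ∧ a ⋖ d' := by
  obtain ⟨b', hab', hb'b⟩ := exists_covBy_le_of_lt h.bot_lt
  have hb'c : b' ⊓ c = a :=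
    inf_eq_of_inf_eq_of_le h.inf_bc hb'b le_rfl hab'.le (h.inf_bc ▸ inf_le_right)
  have hb'd : b' ⊓ d = a :=
    inf_eq_of_inf_eq_of_le h.inf_bd hb'b le_rfl hab'.le (h.inf_bd ▸ inf_le_right)
  have hb'e : b' ≤ c ⊔ d := h.sup_cd ▸ h.sup_bc ▸ hb'b.trans le_sup_left
  have hac' : a ⋖ (b' ⊔ d) ⊓ c := covBy_sup_inf_of_covBy hab' hb'd h.inf_cd hb'e
  have had' : a ⋖ (b' ⊔ c) ⊓ d :=
    covBy_sup_inf_of_covBy hab' hb'c (inf_comm c d ▸ h.inf_cd) (sup_comm c d ▸ hb'e)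
  have hsup : (b' ⊔ d) ⊓ c ⊔ d = b' ⊔ d :=
    inf_sup_eq_of_le_of_le_sup le_sup_right (sup_le hb'e le_sup_right)
  refine ⟨(b' ⊔ c) ⊓ (b' ⊔ d), b', _, _, .of_ne (hab'.lt.trans_le ?_).ne
    (inf_eq_of_inf_eq_of_le hb'c le_rfl inf_le_right hab'.le hac'.le)
    (inf_eq_of_inf_eq_of_le hb'd le_rfl inf_le_right hab'.le had'.le)
    (inf_eq_of_inf_eq_of_le h.inf_cd inf_le_right inf_le_right hac'.le had'.le) ?_ ?_ ?_,
    hab', hac', had'⟩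
  · exact le_inf le_sup_left le_sup_left
  · rw [inf_comm (b' ⊔ d), sup_inf_assoc_of_le c le_sup_left]
  · rw [inf_comm (b' ⊔ c), ← sup_inf_assoc_of_le d le_sup_left, inf_comm]
  · rw [inf_comm (b' ⊔ c), ← sup_inf_assoc_of_le d (inf_le_right.trans le_sup_right), hsup,
      inf_comm]

end Diamond

/-- **Lemma (small diamond).** A finite modular non-distributive lattice contains a diamond
sublattice whose top and bottom differ in rank by two: there are `a, e` and pairwise distinct
`b, c, d` whose pairwise meets are `a`, pairwise joins are `e`, and each of `b, c, d`
covers `a` and is covered by `e`. -/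
theorem modular_not_distributive_has_small_diamond
    {L : Type*} [Lattice L] [Fintype L]
    (hmod : ∀ x y z : L, x ≤ z → x ⊔ (y ⊓ z) = (x ⊔ y) ⊓ z)
    (hnotdistrib : ¬ ∀ x y z : L, x ⊓ (y ⊔ z) = (x ⊓ y) ⊔ (x ⊓ z)) :
    ∃ (a e b c d : L), b ≠ c ∧ b ≠ d ∧ c ≠ d ∧
      b ⊓ c = a ∧ b ⊓ d = a ∧ c ⊓ d = a ∧
      b ⊔ c = e ∧ b ⊔ d = e ∧ c ⊔ d = e ∧
      a ⋖ b ∧ a ⋖ c ∧ a ⋖ d ∧ b ⋖ e ∧ c ⋖ e ∧ d ⋖ e := by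
  have : IsModularLattice L := ⟨fun {x} y {z} h => (hmod x y z h).ge⟩
  push Not at hnotdistrib
  obtain ⟨x, y, z, hxyz⟩ := hnotdistrib
  obtain ⟨e, b, c, d, h, hab, hac, had⟩ := (isDiamond_diamondMid hxyz).exists_covBy
  obtain ⟨hbe, hce, hde⟩ := h.covBy_top hab hac
  exact ⟨_, e, b, c, d, h.ne_bc, h.ne_bd, h.ne_cd, h.inf_bc, h.inf_bd, h.inf_cd,
    h.sup_bc, h.sup_bd, h.sup_cd, hab, hac, had, hbe, hce, hde⟩
end

section
/- Let L be a finite lattice and K a field such that the join-meet ideal I_L ⊆ K[L] is a radical ideal. Then for every admissible subset A ⊆ L, the join-meet ideal I_{L_A} of the sublattice L_A = L∖A (an ideal of the polynomial ring K[L_A] whose variables are indexed by the elements of L∖A) is also a radical ideal. -/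
/-!
The ring maps `rename Subtype.val : K[L ∖ A] → K[L]` and `killVars` (setting the variables
indexed by `A` to zero) satisfy `killVars ∘ rename = id`. The first sends basic binomials of
`L ∖ A` to basic binomials of `L`; by admissibility the second sends a basic binomial of `L`
either to zero or to a basic binomial of `L ∖ A`. Hence the join-meet ideal of `L ∖ A` is the
preimage of `I_L` under `rename`, and preimages of radical ideals are radical.
-/

open MvPolynomial

/-- The join-meet ideal of a finite lattice `L`: the ideal of `K[L]` generated by the
basic binomials `X a * X b - X (a ⊓ b) * X (a ⊔ b)` for incomparable `a, b ∈ L`. -/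
noncomputable def joinMeetIdeal (K : Type*) [Field K] (L : Type*) [Lattice L] :
    Ideal (MvPolynomial L K) :=
  Ideal.span {f | ∃ a b : L, ¬ a ≤ b ∧ ¬ b ≤ a ∧
    f = X a * X b - X (a ⊓ b) * X (a ⊔ b)}

/-- A subset `A` of a lattice is admissible if for every incomparable pair `a, b`,
`A` contains `a` or `b` iff `A` contains `a ⊓ b` or `a ⊔ b`. -/
def Admissible {L : Type*} [Lattice L] (A : Set L) : Prop :=
  ∀ a b : L, ¬ a ≤ b → ¬ b ≤ a → ((a ∈ A ∨ b ∈ A) ↔ (a ⊓ b ∈ A ∨ a ⊔ b ∈ A))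

theorem Ideal.eq_comap_of_leftInverse {R S : Type*} [Semiring R] [Semiring S]
    {ψ : R →+* S} {φ : S →+* R} (hφψ : Function.LeftInverse φ ψ) {I : Ideal R} {J : Ideal S}
    (hI : I ≤ J.comap ψ) (hJ : J ≤ I.comap φ) : I = J.comap ψ :=
  le_antisymm hI fun f hf => hφψ f ▸ hJ hf

namespace Admissible

variable {L : Type*} [Lattice L] {A : Set L}

theorem inf_notMem (hA : Admissible A) {a b : L} (hab : ¬ a ≤ b) (hba : ¬ b ≤ a)
    (ha : a ∉ A) (hb : b ∉ A) : a ⊓ b ∉ A := fun h =>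
  ((hA a b hab hba).mpr (Or.inl h)).elim ha hb

theorem sup_notMem (hA : Admissible A) {a b : L} (hab : ¬ a ≤ b) (hba : ¬ b ≤ a)
    (ha : a ∉ A) (hb : b ∉ A) : a ⊔ b ∉ A := fun h =>
  ((hA a b hab hba).mpr (Or.inr h)).elim ha hb

end Admissible

section KillVars

variable {L R : Type*} [CommSemiring R] {A : Set L}

variable (R A) in
open Classical in
noncomputable def killVars : MvPolynomial L R →ₐ[R] MvPolynomial {x : L // x ∉ A} R :=
  aeval fun c => if h : c ∈ A then 0 else X ⟨c, h⟩

theorem killVars_X_of_mem {c : L} (hc : c ∈ A) : killVars R A (X c) = 0 := by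
  simp [killVars, hc]

theorem killVars_X_of_notMem {c : L} (hc : c ∉ A) : killVars R A (X c) = X ⟨c, hc⟩ := by
  simp [killVars, hc]

theorem killVars_rename_val (f : MvPolynomial {x : L // x ∉ A} R) :
    killVars R A (rename Subtype.val f) = f := by
  rw [killVars, aeval_rename]
  convert aeval_X_left_apply f
  ext ⟨c, hc⟩ : 1
  simp [hc]

end KillVars

section Sublattice

variable {L : Type*} [Lattice L] (K : Type*) [Field K] (A : Set L)

noncomputable def complJoinMeetIdeal : Ideal (MvPolynomial {x : L // x ∉ A} K) :=
  Ideal.span {f : MvPolynomial {x : L // x ∉ A} K |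
    ∃ a b : {x : L // x ∉ A}, ¬ a ≤ b ∧ ¬ b ≤ a ∧
    ∃ p q : {x : L // x ∉ A}, (p : L) = (a : L) ⊓ (b : L) ∧ (q : L) = (a : L) ⊔ (b : L) ∧
    f = X a * X b - X p * X q}

variable {K A}

theorem complJoinMeetIdeal_le_comap_rename :
    complJoinMeetIdeal K A ≤ (joinMeetIdeal K L).comap (rename Subtype.val) := by
  rw [complJoinMeetIdeal, Ideal.span_le]
  rintro _ ⟨a, b, hab, hba, p, q, hp, hq, rfl⟩
  apply Ideal.subset_span
  refine ⟨a, b, fun h => hab (Subtype.coe_le_coe.mp h), fun h => hba (Subtype.coe_le_coe.mp h), ?_⟩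
  simp only [map_sub, map_mul, rename_X, hp, hq]

theorem joinMeetIdeal_le_comap_killVars (hA : Admissible A) :
    joinMeetIdeal K L ≤ (complJoinMeetIdeal K A).comap (killVars K A) := by
  rw [joinMeetIdeal, Ideal.span_le]
  rintro _ ⟨a, b, hab, hba, rfl⟩
  simp only [SetLike.mem_coe, Ideal.mem_comap, map_sub, map_mul]
  by_cases hmem : a ∈ A ∨ b ∈ A
  · -- both monomials contain a variable indexed by `A`
    have hmeet := (hA a b hab hba).mp hmem
    rcases hmem with h | h <;> rcases hmeet with h' | h' <;>
      simp [killVars_X_of_mem h, killVars_X_of_mem h']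
  · obtain ⟨ha, hb⟩ := not_or.mp hmem
    have hinf := hA.inf_notMem hab hba ha hb
    have hsup := hA.sup_notMem hab hba ha hb
    simp only [killVars_X_of_notMem ha, killVars_X_of_notMem hb, killVars_X_of_notMem hinf,
      killVars_X_of_notMem hsup]
    exact Ideal.subset_span ⟨⟨a, ha⟩, ⟨b, hb⟩, fun h => hab (Subtype.coe_le_coe.mp h),
      fun h => hba (Subtype.coe_le_coe.mp h), ⟨a ⊓ b, hinf⟩, ⟨a ⊔ b, hsup⟩, rfl, rfl, rfl⟩

theorem complJoinMeetIdeal_eq_comap_rename (hA : Admissible A) :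
    complJoinMeetIdeal K A = (joinMeetIdeal K L).comap (rename Subtype.val) :=
  Ideal.eq_comap_of_leftInverse (φ := (killVars K A).toRingHom) killVars_rename_val
    complJoinMeetIdeal_le_comap_rename (joinMeetIdeal_le_comap_killVars hA)

end Sublattice

theorem joinMeetIdeal_sublattice_isRadical_general
    {L : Type*} [Lattice L] (K : Type*) [Field K]
    (hrad : (joinMeetIdeal K L).IsRadical) (A : Set L) (hA : Admissible A) :
    (Ideal.span {f : MvPolynomial {x : L // x ∉ A} K |
        ∃ a b : {x : L // x ∉ A}, ¬ a ≤ b ∧ ¬ b ≤ a ∧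
        ∃ p q : {x : L // x ∉ A}, (p : L) = (a : L) ⊓ (b : L) ∧ (q : L) = (a : L) ⊔ (b : L) ∧
        f = X a * X b - X p * X q}).IsRadical := by
  change (complJoinMeetIdeal K A).IsRadical
  rw [complJoinMeetIdeal_eq_comap_rename hA]
  exact hrad.comap _

/-- **Proposition.** If the join-meet ideal `I_L` of a finite lattice is radical, then for every
admissible set `A ⊆ L` the join-meet ideal of the sublattice `L_A = L ∖ A` — the ideal of the
polynomial ring whose variables are indexed by `L ∖ A`, generated by the binomials
`X a * X b - X (a ⊓ b) * X (a ⊔ b)` over incomparable pairs `a, b ∈ L ∖ A` (the meet and join,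
computed in `L`, lie in `L ∖ A` by admissibility) — is also radical. -/
theorem joinMeetIdeal_sublattice_isRadical
    {L : Type*} [Lattice L] [Fintype L] (K : Type*) [Field K]
    (hrad : (joinMeetIdeal K L).IsRadical) (A : Set L) (hA : Admissible A) :
    (Ideal.span {f : MvPolynomial {x : L // x ∉ A} K |
        ∃ a b : {x : L // x ∉ A}, ¬ a ≤ b ∧ ¬ b ≤ a ∧
        ∃ p q : {x : L // x ∉ A}, (p : L) = (a : L) ⊓ (b : L) ∧ (q : L) = (a : L) ⊔ (b : L) ∧
        f = X a * X b - X p * X q}).IsRadical :=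
  joinMeetIdeal_sublattice_isRadical_general K hrad A hA
end

section
/- Let L be a finite lattice and K a field such that the join-meet ideal I_L ⊆ K[L] is a radical ideal. Then I_L equals the intersection, over all admissible subsets A ⊆ L, of the prime ideals P_A(L) = (I_{L_A} : ∏_{a∉A} X_a) + (X_a : a ∈ A). -/
open MvPolynomial

/-- The ideal `I_{L_A}` of `K[L]` generated by the basic binomials of the incomparable pairs
of elements of `L ∖ A`. -/
noncomputable def sublatticeJoinMeetIdeal (K : Type*) [Field K] (L : Type*) [Lattice L]
    (A : Set L) : Ideal (MvPolynomial L K) :=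
  Ideal.span {f | ∃ a b : L, a ∉ A ∧ b ∉ A ∧ ¬ a ≤ b ∧ ¬ b ≤ a ∧
    f = X a * X b - X (a ⊓ b) * X (a ⊔ b)}

open scoped Classical in
/-- The prime ideal `P_A(L) = (I_{L_A} : ∏_{a ∉ A} X a) + (X a : a ∈ A)`. -/
noncomputable def PA (K : Type*) [Field K] (L : Type*) [Lattice L] [Fintype L]
    (A : Set L) : Ideal (MvPolynomial L K) :=
  Submodule.colon (sublatticeJoinMeetIdeal K L A)
      ((Ideal.span {∏ a ∈ Finset.univ.filter (fun a : L => a ∉ A), X a} :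
        Ideal (MvPolynomial L K)) : Set (MvPolynomial L K)) ⊔
    Ideal.span {f | ∃ a ∈ A, f = (X a : MvPolynomial L K)}

/-!
The inclusion `I_L ⊆ P_A(L)` is checked on generators: a basic binomial of a pair meeting `A`
lies in `(X a : a ∈ A)` by admissibility, and one of a pair in `L ∖ A` lies in `I_{L_A}`.
Conversely, a prime `J ⊇ I_L` contains `P_A(L)` for `A = {a | X a ∈ J}`: this `A` is admissible
because `X a * X b ≡ X (a ⊓ b) * X (a ⊔ b)` modulo `J`, and `∏_{a ∉ A} X a ∉ J`. Hence
`⋂_A P_A(L)` lies in every prime containing `I_L`, i.e. in its radical, which is `I_L`.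
-/

lemma X_mul_X_mem_span_X {R σ : Type*} [CommSemiring R] {A : Set σ} {a b : σ}
    (h : a ∈ A ∨ b ∈ A) :
    (X a * X b : MvPolynomial σ R) ∈ Ideal.span {f | ∃ a ∈ A, f = (X a : MvPolynomial σ R)} := by
  rcases h with ha | hb
  · exact Ideal.mul_mem_right _ _ (Ideal.subset_span ⟨a, ha, rfl⟩)
  · exact Ideal.mul_mem_left _ _ (Ideal.subset_span ⟨b, hb, rfl⟩)

section

variable {K : Type*} [Field K] {L : Type*} [Lattice L]

lemma sublatticeJoinMeetIdeal_le_joinMeetIdeal (A : Set L) :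
    sublatticeJoinMeetIdeal K L A ≤ joinMeetIdeal K L :=
  Ideal.span_mono fun _ ⟨a, b, _, _, hab, hba, hf⟩ => ⟨a, b, hab, hba, hf⟩

lemma joinMeetIdeal_le_PA [Fintype L] {A : Set L} (hA : Admissible A) :
    joinMeetIdeal K L ≤ PA K L A := by
  rw [joinMeetIdeal, Ideal.span_le]
  rintro f ⟨a, b, hab, hba, rfl⟩
  by_cases hmeet : a ∈ A ∨ b ∈ A
  · exact Ideal.mem_sup_right <|
      Ideal.sub_mem _ (X_mul_X_mem_span_X hmeet) (X_mul_X_mem_span_X ((hA a b hab hba).mp hmeet))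
  · obtain ⟨ha, hb⟩ := not_or.mp hmeet
    exact Ideal.mem_sup_left <| Ideal.le_colon <| Ideal.subset_span ⟨a, b, ha, hb, hab, hba, rfl⟩

section Prime

variable {J : Ideal (MvPolynomial L K)} [hJ : J.IsPrime]

lemma admissible_setOf_X_mem (hle : joinMeetIdeal K L ≤ J) : Admissible {a : L | X a ∈ J} := by
  intro a b hab hba
  have hdiff : (X a * X b - X (a ⊓ b) * X (a ⊔ b) : MvPolynomial L K) ∈ J :=
    hle (Ideal.subset_span ⟨a, b, hab, hba, rfl⟩)
  have hcongr : (X a * X b : MvPolynomial L K) ∈ J ↔ X (a ⊓ b) * X (a ⊔ b) ∈ J :=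
    ⟨fun h => (J.sub_mem_iff_right h).mp hdiff, fun h => (J.sub_mem_iff_left h).mp hdiff⟩
  simpa only [Set.mem_ofPred_eq, hJ.mul_mem_iff_mem_or_mem] using hcongr

lemma PA_setOf_X_mem_le [Fintype L] (hle : joinMeetIdeal K L ≤ J) :
    PA K L {a : L | X a ∈ J} ≤ J := by
  classical
  refine sup_le (fun g hg => ?_) (Ideal.span_le.mpr fun _ ⟨a, ha, hf⟩ => hf ▸ ha)
  set m : MvPolynomial L K := ∏ a ∈ Finset.univ.filter (fun a : L => X a ∉ J), X a
  have hgm : g * m ∈ J := by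
    have hgm' : g • m ∈ sublatticeJoinMeetIdeal K L {a | X a ∈ J} :=
      Submodule.mem_colon.mp hg m (Ideal.subset_span rfl)
    exact hle (sublatticeJoinMeetIdeal_le_joinMeetIdeal _ hgm')
  have hm : m ∉ J := by
    rw [hJ.prod_mem_iff]
    rintro ⟨a, ha, haJ⟩
    exact (Finset.mem_filter.mp ha).2 haJ
  exact (hJ.mem_or_mem hgm).resolve_right hm

end Prime

lemma iInf_PA_le_radical_joinMeetIdeal [Fintype L] :
    ⨅ A ∈ {A : Set L | Admissible A}, PA K L A ≤ (joinMeetIdeal K L).radical := by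
  rw [Ideal.radical_eq_sInf]
  refine le_sInf fun J ⟨hle, hJ⟩ => ?_
  exact (biInf_le _ (admissible_setOf_X_mem hle)).trans (PA_setOf_X_mem_le hle)

end

/-- **Theorem.** If the join-meet ideal `I_L` of a finite lattice is radical, then `I_L` is the
intersection of the ideals `P_A(L)` over all admissible subsets `A ⊆ L`. -/
theorem joinMeetIdeal_eq_iInf_PA
    {L : Type*} [Lattice L] [Fintype L] (K : Type*) [Field K]
    (hrad : (joinMeetIdeal K L).IsRadical) :
    joinMeetIdeal K L = ⨅ A ∈ {A : Set L | Admissible A}, PA K L A :=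
  le_antisymm (le_iInf₂ fun _ hA => joinMeetIdeal_le_PA hA)
    (hrad.radical ▸ iInf_PA_le_radical_joinMeetIdeal)
end

section
/- In the polynomial ring K[a,b,c,d,e,f,g] over a field K, let I_Q = (bc − ae, cd − ag, cf − ag, de − bg, ef − bg) and J = (ae − bc, ag − cf, bg − ef, d − f). Then I_Q = J ∩ (a, b, c, e) ∩ (c, e, g). -/
/-!
Modulo `I_Q` the linear form `d - f` generates `J`, so an element of `J` has the form
`p + q (d - f)` with `p ∈ I_Q`. If it also lies in the monomial primes `(a, b, c, e)` and
`(c, e, g)`, which contain `I_Q` but not `d - f`, then so does `q`. The intersection of these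
two primes is `(c, e, ag, bg)`, and each of these four generators times `d - f` lies in `I_Q`.
-/

open MvPolynomial

-- Variables of `K[a,b,c,d,e,f,g]`, indexed by `Fin 7`:
-- `a = X 0`, `b = X 1`, `c = X 2`, `d = X 3`, `e = X 4`, `f = X 5`, `g = X 6`.

/-- The join-meet ideal `I_Q = (bc − ae, cd − ag, cf − ag, de − bg, ef − bg)` of the
lattice `Q`. -/
noncomputable def IQ (K : Type*) [Field K] : Ideal (MvPolynomial (Fin 7) K) :=
  Ideal.span {X 1 * X 2 - X 0 * X 4, X 2 * X 3 - X 0 * X 6, X 2 * X 5 - X 0 * X 6,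
    X 3 * X 4 - X 1 * X 6, X 4 * X 5 - X 1 * X 6}

/-- The ideal `J = (ae − bc, ag − cf, bg − ef, d − f)`. -/
noncomputable def JQ (K : Type*) [Field K] : Ideal (MvPolynomial (Fin 7) K) :=
  Ideal.span {X 0 * X 4 - X 1 * X 2, X 0 * X 6 - X 2 * X 5, X 1 * X 6 - X 4 * X 5,
    X 3 - X 5}

open Ideal

namespace Ideal

variable {R : Type*} [CommRing R]

theorem IsPrime.colon_singleton_le {P : Ideal R} (hP : P.IsPrime) {y : R} (hy : y ∉ P) :
    P.colon {y} ≤ P := fun _ hq =>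
  (hP.mem_or_mem (Submodule.mem_colon_singleton.mp hq)).resolve_right hy

theorem inf_le_of_le_sup_span_singleton {I J N : Ideal R} {y : R} (hJ : J ≤ I ⊔ span {y})
    (hIN : I ≤ N) (hN : N.colon {y} ≤ N) (hNI : N ≤ I.colon {y}) : J ⊓ N ≤ I := by
  rintro x ⟨hxJ, hxN⟩
  obtain ⟨p, hp, _, hw, rfl⟩ := Submodule.mem_sup.mp (hJ hxJ)
  obtain ⟨q, rfl⟩ := mem_span_singleton'.mp hw
  have hqN : q ∈ N :=
    hN (Submodule.mem_colon_singleton.mpr ((N.add_mem_iff_right (hIN hp)).mp hxN))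
  exact I.add_mem hp (Submodule.mem_colon_singleton.mp (hNI hqN))

end Ideal

namespace MvPolynomial

variable {σ R : Type*}

section CommSemiring

variable [CommSemiring R]

theorem X_mul_X_mem_span_X_image {s : Set σ} {i j : σ} (h : i ∈ s ∨ j ∈ s) :
    (X i * X j : MvPolynomial σ R) ∈ span (X '' s) :=
  h.elim (fun hi => mul_mem_right _ _ (subset_span ⟨i, hi, rfl⟩))
    fun hj => mul_mem_left _ _ (subset_span ⟨j, hj, rfl⟩)

theorem span_X_image_inf_span_X_image_le (s t : Set σ) :
    span (X '' s) ⊓ span (X '' t) ≤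
      (span (X '' (s ∩ t) ∪ (fun p => X p.1 * X p.2) '' (s ×ˢ t)) :
        Ideal (MvPolynomial σ R)) := by
  classical
  have hmon : X '' (s ∩ t) ∪ (fun p => X p.1 * X p.2) '' (s ×ˢ t) =
      (fun m => monomial m (1 : R)) '' ((fun i => Finsupp.single i 1) '' (s ∩ t) ∪
        (fun p => Finsupp.single p.1 1 + Finsupp.single p.2 1) '' (s ×ˢ t)) := by
    simp only [Set.image_union, Set.image_image, X, monomial_mul, mul_one]
    rfl
  rintro x ⟨hs, ht⟩
  rw [SetLike.mem_coe, mem_ideal_span_X_image] at hs ht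
  rw [hmon, mem_ideal_span_monomial_image]
  intro m hm
  obtain ⟨i, hi, hmi⟩ := hs m hm
  obtain ⟨j, hj, hmj⟩ := ht m hm
  by_cases hij : i = j
  · subst hij
    exact ⟨_, Or.inl ⟨i, ⟨hi, hj⟩, rfl⟩,
      Finsupp.single_le_iff.mpr (Nat.one_le_iff_ne_zero.mpr hmi)⟩
  · refine ⟨_, Or.inr ⟨(i, j), ⟨hi, hj⟩, rfl⟩, fun k => ?_⟩
    by_cases hki : k = i <;> by_cases hkj : k = j <;>
      simp_all [Ne.symm hij, Nat.one_le_iff_ne_zero]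

end CommSemiring

section CommRing

variable [CommRing R]

theorem ker_aeval_ite_eq_span_X_image (s : Set σ) [DecidablePred (· ∈ s)] :
    RingHom.ker (aeval (R := R) (fun i => if i ∈ s then 0 else (X i : MvPolynomial σ R))) =
      span (X '' s) := by
  set φ := aeval (R := R) fun i => if i ∈ s then 0 else (X i : MvPolynomial σ R)
  have sub_mem_span (p : MvPolynomial σ R) : p - φ p ∈ span (X '' s) := by
    induction p using MvPolynomial.induction_on with
    | C a => simp
    | add p q hp hq => simpa [add_sub_add_comm] using add_mem hp hq
    | mul_X p i hp =>
      by_cases hi : i ∈ s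
      · simpa [φ, hi] using mul_mem_left (span (X '' s)) p (subset_span ⟨i, hi, rfl⟩)
      · simpa [φ, hi, sub_mul] using mul_mem_right (X i) _ hp
  refine le_antisymm (fun p hp => ?_) (span_le.mpr ?_)
  · simpa [RingHom.mem_ker.mp hp] using sub_mem_span p
  · rintro _ ⟨i, hi, rfl⟩
    simp [φ, hi]

theorem isPrime_span_X_image [IsDomain R] (s : Set σ) :
    (span (X '' s) : Ideal (MvPolynomial σ R)).IsPrime := by
  classical
  rw [← ker_aeval_ite_eq_span_X_image]
  exact RingHom.ker_isPrime _

theorem X_sub_X_notMem_span_X_image [Nontrivial R] {s : Set σ} {i j : σ} (hi : i ∉ s)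
    (hij : i ≠ j) : (X i - X j : MvPolynomial σ R) ∉ span (X '' s) := by
  classical
  rw [mem_ideal_span_X_image]
  intro h
  obtain ⟨k, hk, hik⟩ := h (Finsupp.single i 1) (by
    simp [mem_support_iff, coeff_X, Finsupp.single_left_inj one_ne_zero, hij.symm])
  rw [Finsupp.single_apply_ne_zero] at hik
  exact hi (hik.1 ▸ hk)

end CommRing

end MvPolynomial

section JoinMeet

variable {K : Type*} [Field K]

theorem IQ_le_JQ : IQ K ≤ JQ K := by
  have gen : ∀ p ∈ ({X 0 * X 4 - X 1 * X 2, X 0 * X 6 - X 2 * X 5, X 1 * X 6 - X 4 * X 5,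
      X 3 - X 5} : Set (MvPolynomial (Fin 7) K)), p ∈ JQ K := fun _ hp => subset_span hp
  rw [IQ, span_le]
  rintro _ (rfl | rfl | rfl | rfl | rfl) <;> rw [SetLike.mem_coe]
  · exact sub_mem_comm_iff.mp (gen _ (by simp))
  · convert sub_mem (mul_mem_left _ (X 2) (gen (X 3 - X 5) (by simp)))
      (gen (X 0 * X 6 - X 2 * X 5) (by simp)) using 1
    ring
  · exact sub_mem_comm_iff.mp (gen _ (by simp))
  · convert sub_mem (mul_mem_left _ (X 4) (gen (X 3 - X 5) (by simp)))
      (gen (X 1 * X 6 - X 4 * X 5) (by simp)) using 1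
    ring
  · exact sub_mem_comm_iff.mp (gen _ (by simp))

theorem JQ_le_IQ_sup_span : JQ K ≤ IQ K ⊔ span {X 3 - X 5} := by
  have gen : ∀ p ∈ ({X 1 * X 2 - X 0 * X 4, X 2 * X 3 - X 0 * X 6, X 2 * X 5 - X 0 * X 6,
      X 3 * X 4 - X 1 * X 6, X 4 * X 5 - X 1 * X 6} : Set (MvPolynomial (Fin 7) K)),
      p ∈ IQ K ⊔ span {X 3 - X 5} := fun _ hp => mem_sup_left (subset_span hp)
  rw [JQ, span_le]
  rintro _ (rfl | rfl | rfl | rfl)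
  iterate 3 exact sub_mem_comm_iff.mp (gen _ (by simp))
  · exact mem_sup_right (mem_span_singleton_self _)

theorem IQ_le_span_X_image {s : Set (Fin 7)} (hc : 2 ∈ s) (he : 4 ∈ s)
    (hag : 0 ∈ s ∨ 6 ∈ s) (hbg : 1 ∈ s ∨ 6 ∈ s) : IQ K ≤ span (X '' s) := by
  rw [IQ, span_le]
  rintro _ (rfl | rfl | rfl | rfl | rfl) <;>
    exact sub_mem (X_mul_X_mem_span_X_image (by simp [*]))
      (X_mul_X_mem_span_X_image (by simp [*]))

theorem span_X_abce_inf_span_X_ceg_le_IQ_colon :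
    span (X '' {0, 1, 2, 4}) ⊓ span (X '' {2, 4, 6}) ≤ (IQ K).colon {X 3 - X 5} := by
  have gen : ∀ p ∈ ({X 1 * X 2 - X 0 * X 4, X 2 * X 3 - X 0 * X 6, X 2 * X 5 - X 0 * X 6,
      X 3 * X 4 - X 1 * X 6, X 4 * X 5 - X 1 * X 6} : Set (MvPolynomial (Fin 7) K)),
      p ∈ IQ K := fun _ hp => subset_span hp
  have hc : X 2 ∈ (IQ K).colon {X 3 - X 5} := by
    rw [Submodule.mem_colon_singleton, smul_eq_mul]
    convert sub_mem (gen (X 2 * X 3 - X 0 * X 6) (by simp))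
      (gen (X 2 * X 5 - X 0 * X 6) (by simp)) using 1
    ring
  have he : X 4 ∈ (IQ K).colon {X 3 - X 5} := by
    rw [Submodule.mem_colon_singleton, smul_eq_mul]
    convert sub_mem (gen (X 3 * X 4 - X 1 * X 6) (by simp))
      (gen (X 4 * X 5 - X 1 * X 6) (by simp)) using 1
    ring
  have hag : X 0 * X 6 ∈ (IQ K).colon {X 3 - X 5} := by
    rw [Submodule.mem_colon_singleton, smul_eq_mul]
    convert sub_mem (mul_mem_left _ (X 5) (gen (X 2 * X 3 - X 0 * X 6) (by simp)))
      (mul_mem_left _ (X 3) (gen (X 2 * X 5 - X 0 * X 6) (by simp))) using 1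
    ring
  have hbg : X 1 * X 6 ∈ (IQ K).colon {X 3 - X 5} := by
    rw [Submodule.mem_colon_singleton, smul_eq_mul]
    convert sub_mem (mul_mem_left _ (X 5) (gen (X 3 * X 4 - X 1 * X 6) (by simp)))
      (mul_mem_left _ (X 3) (gen (X 4 * X 5 - X 1 * X 6) (by simp))) using 1
    ring
  refine (span_X_image_inf_span_X_image_le _ _).trans (span_le.mpr ?_)
  rintro _ (⟨i, ⟨hi, hi'⟩, rfl⟩ | ⟨⟨i, j⟩, ⟨hi, hj⟩, rfl⟩)
  · rcases hi' with rfl | rfl | rfl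
    exacts [hc, he, by simp at hi]
  · rcases hj with rfl | rfl | rfl
    · exact mul_mem_left _ _ hc
    · exact mul_mem_left _ _ he
    · rcases hi with rfl | rfl | rfl | rfl
      exacts [hag, hbg, mul_mem_right _ _ hc, mul_mem_right _ _ he]

end JoinMeet

/-- **Example.** `I_Q = J ∩ (a, b, c, e) ∩ (c, e, g)`. -/
theorem IQ_eq_inter
    (K : Type*) [Field K] :
    IQ K = JQ K ⊓ Ideal.span {(X 0 : MvPolynomial (Fin 7) K), X 1, X 2, X 4} ⊓
      Ideal.span {(X 2 : MvPolynomial (Fin 7) K), X 4, X 6} := by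
  have habce : ({X 0, X 1, X 2, X 4} : Set (MvPolynomial (Fin 7) K)) = X '' {0, 1, 2, 4} := by
    simp [Set.image_insert_eq]
  have hceg : ({X 2, X 4, X 6} : Set (MvPolynomial (Fin 7) K)) = X '' {2, 4, 6} := by
    simp [Set.image_insert_eq]
  rw [habce, hceg, inf_assoc]
  set P₁ : Ideal (MvPolynomial (Fin 7) K) := span (X '' {0, 1, 2, 4})
  set P₂ : Ideal (MvPolynomial (Fin 7) K) := span (X '' {2, 4, 6})
  have hI : IQ K ≤ P₁ ⊓ P₂ :=
    le_inf (IQ_le_span_X_image (by simp) (by simp) (by simp) (by simp))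
      (IQ_le_span_X_image (by simp) (by simp) (by simp) (by simp))
  have hcolon : (P₁ ⊓ P₂).colon {X 3 - X 5} ≤ P₁ ⊓ P₂ := by
    rw [Submodule.inf_colon]
    exact inf_le_inf
      ((isPrime_span_X_image _).colon_singleton_le
        (X_sub_X_notMem_span_X_image (by simp) (by decide)))
      ((isPrime_span_X_image _).colon_singleton_le
        (X_sub_X_notMem_span_X_image (by simp) (by decide)))
  exact le_antisymm (le_inf IQ_le_JQ hI)
    (inf_le_of_le_sup_span_singleton JQ_le_IQ_sup_span hI hcolon
      span_X_abce_inf_span_X_ceg_le_IQ_colon)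
end

section
/- In the polynomial ring K[a,b,c,d,e,f,g,h,l] over a field K, let I_N = (bc − ad, be − ah, bf − ah, de − ch, df − ch, ef − ch, eg − cl, fg − cl, gh − dl). Then the polynomial a·l·g·(d − f) belongs to the radical √(I_N) but not to I_N; in particular, the ideal I_N is not a radical ideal. -/
/-!
Six of the nine generators combine to `(a·l·g·(d − f))²`, so `a·l·g·(d − f) ∈ √I_N`.
On the other hand every generator vanishes at the point
`(a, …, l) = (1, 0, ε, 0, ε, ε, 1, 0, 1)` over the dual numbers `K[ε]`, where
`a·l·g·(d − f)` takes the value `−ε ≠ 0`; hence it is not in `I_N`.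
-/

open MvPolynomial

-- Variables of `K[a,b,c,d,e,f,g,h,l]`, indexed by `Fin 9`:
-- `a = X 0`, `b = X 1`, `c = X 2`, `d = X 3`, `e = X 4`, `f = X 5`, `g = X 6`, `h = X 7`,
-- `l = X 8`.

/-- The join-meet ideal
`I_N = (bc − ad, be − ah, bf − ah, de − ch, df − ch, ef − ch, eg − cl, fg − cl, gh − dl)`
of the lattice `N`. -/
noncomputable def IN (K : Type*) [Field K] : Ideal (MvPolynomial (Fin 9) K) :=
  Ideal.span {X 1 * X 2 - X 0 * X 3, X 1 * X 4 - X 0 * X 7, X 1 * X 5 - X 0 * X 7,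
    X 3 * X 4 - X 2 * X 7, X 3 * X 5 - X 2 * X 7, X 4 * X 5 - X 2 * X 7,
    X 4 * X 6 - X 2 * X 8, X 5 * X 6 - X 2 * X 8, X 6 * X 7 - X 3 * X 8}

open DualNumber

lemma sq_eq_zero_of_relations {R : Type*} [CommRing R] {a b c d e f g h l : R}
    (hbe : b * e = a * h) (hde : d * e = c * h) (hef : e * f = c * h) (heg : e * g = c * l)
    (hfg : f * g = c * l) (hgh : g * h = d * l) :
    (a * l * g * (d - f)) ^ 2 = 0 := by
  linear_combination a * l * g ^ 2 * (b * g - a * l) * hde - a * l * g ^ 2 * (b * g - a * l) * hef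
    - a * l * g ^ 3 * (d - f) * hbe + a ^ 2 * l ^ 2 * g * (d - f) * heg
    - a ^ 2 * l ^ 2 * g * (d - f) * hfg - a ^ 2 * l * g ^ 2 * (d - f) * hgh

def dualPoint (R : Type*) [Semiring R] : Fin 9 → R[ε] := ![1, 0, ε, 0, ε, ε, 1, 0, 1]

lemma aeval_dualPoint {R : Type*} [CommRing R] :
    aeval (dualPoint R) (X 0 * X 8 * X 6 * (X 3 - X 5) : MvPolynomial (Fin 9) R) = -ε := by
  simp [dualPoint]

section

variable {K : Type*} [Field K]

lemma sq_mem_IN :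
    (X 0 * X 8 * X 6 * (X 3 - X 5) : MvPolynomial (Fin 9) K) ^ 2 ∈ IN K := by
  let mk := Ideal.Quotient.mk (IN K)
  have rel (i j k m : Fin 9)
      (hmem : X i * X j - X k * X m ∈ IN K := by exact Ideal.subset_span (by simp)) :
      mk (X i) * mk (X j) = mk (X k) * mk (X m) := by
    rw [← map_mul, ← map_mul, Ideal.Quotient.eq]
    exact hmem
  rw [← Ideal.Quotient.eq_zero_iff_mem]
  simpa only [mk, map_pow, map_mul, map_sub] using
    sq_eq_zero_of_relations (rel 1 4 0 7) (rel 3 4 2 7) (rel 4 5 2 7) (rel 4 6 2 8) (rel 5 6 2 8)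
      (rel 6 7 3 8)

lemma aeval_dualPoint_eq_zero_of_mem_IN {p : MvPolynomial (Fin 9) K} (hp : p ∈ IN K) :
    aeval (dualPoint K) p = 0 := by
  suffices IN K ≤ RingHom.ker (aeval (dualPoint K)) from this hp
  rw [IN, Ideal.span_le]
  intro r hr
  simp only [Set.mem_insert_iff, Set.mem_singleton_iff] at hr
  rcases hr with rfl | rfl | rfl | rfl | rfl | rfl | rfl | rfl | rfl <;>
    simp [dualPoint, eps_mul_eps]

lemma notMem_IN : (X 0 * X 8 * X 6 * (X 3 - X 5) : MvPolynomial (Fin 9) K) ∉ IN K := by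
  intro hmem
  have h := aeval_dualPoint_eq_zero_of_mem_IN hmem
  rw [aeval_dualPoint, neg_eq_zero] at h
  exact one_ne_zero (congrArg TrivSqZeroExt.snd h)

end

/-- **Example.** The polynomial `a·l·g·(d − f)` lies in `√(I_N)` but not in `I_N`;
in particular, `I_N` is not a radical ideal. -/
theorem IN_not_radical
    (K : Type*) [Field K] :
    (X 0 * X 8 * X 6 * (X 3 - X 5) ∈ (IN K).radical) ∧
      (X 0 * X 8 * X 6 * (X 3 - X 5) ∉ IN K) ∧
      ¬ (IN K).IsRadical := by
  have hrad : (X 0 * X 8 * X 6 * (X 3 - X 5) : MvPolynomial (Fin 9) K) ∈ (IN K).radical :=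
    ⟨2, sq_mem_IN⟩
  exact ⟨hrad, notMem_IN, fun h => notMem_IN (h hrad)⟩
end

section
/- For every 1 ≤ k ≤ n−1, the ideal I = I_{L_k} satisfies I = (I + (x_{k+1} − y_k)) ∩ (I + (z)), where (I + (x_{k+1} − y_k)) and (I + (z)) denote the ideals of S generated by I together with x_{k+1} − y_k, respectively together with z. -/
open MvPolynomial

/-- The variable `x_i` (for `1 ≤ i ≤ n`) of the polynomial ring
`S = K[x_1,…,x_n, y_1,…,y_n, z]` in `2n+1` variables. -/
noncomputable def xv (K : Type*) [Field K] (n i : ℕ) :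
    MvPolynomial (Fin n ⊕ Fin n ⊕ Unit) K :=
  if h : 1 ≤ i ∧ i ≤ n then X (Sum.inl ⟨i - 1, by omega⟩) else 0

/-- The variable `y_i` (for `1 ≤ i ≤ n`) of `S = K[x_1,…,x_n, y_1,…,y_n, z]`. -/
noncomputable def yv (K : Type*) [Field K] (n i : ℕ) :
    MvPolynomial (Fin n ⊕ Fin n ⊕ Unit) K :=
  if h : 1 ≤ i ∧ i ≤ n then X (Sum.inr (Sum.inl ⟨i - 1, by omega⟩)) else 0

/-- The variable `z` of `S = K[x_1,…,x_n, y_1,…,y_n, z]`. -/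
noncomputable def zv (K : Type*) [Field K] (n : ℕ) :
    MvPolynomial (Fin n ⊕ Fin n ⊕ Unit) K :=
  X (Sum.inr (Sum.inr ()))

/-- The join-meet ideal `I = I_{L_k} ⊆ K[x_1,…,x_n, y_1,…,y_n, z]`, generated by the binomials
`x_j·y_i − x_i·y_j` for `1 ≤ i < j ≤ n`, `z·x_j − x_k·y_j` for `k+1 ≤ j ≤ n`, and
`z·y_i − x_i·y_{k+1}` for `1 ≤ i ≤ k`. -/
noncomputable def LkIdeal (K : Type*) [Field K] (n k : ℕ) :
    Ideal (MvPolynomial (Fin n ⊕ Fin n ⊕ Unit) K) :=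
  Ideal.span
    ({f | ∃ i j : ℕ, 1 ≤ i ∧ i < j ∧ j ≤ n ∧
        f = xv K n j * yv K n i - xv K n i * yv K n j} ∪
      {f | ∃ j : ℕ, k + 1 ≤ j ∧ j ≤ n ∧
        f = zv K n * xv K n j - xv K n k * yv K n j} ∪
      {f | ∃ i : ℕ, 1 ≤ i ∧ i ≤ k ∧
        f = zv K n * yv K n i - xv K n i * yv K n (k + 1)})

/-!
Write `g = x_{k+1} - y_k`. Since `z g = (z x_{k+1} - x_k y_{k+1}) - (z y_k - x_k y_{k+1}) ∈ I`,
the equality `I = (I + (g)) ∩ (I + (z))` follows once `z` is a nonzerodivisor modulo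
`J = I + (g)`. To see this, `J` is written as the intersection of the kernels of three maps into
domains, none of which kills `z`: a monomial map realising the toric variety of `J`, and the two
maps killing every variable except `z, x_1, …, x_k`, respectively `z, y_{k+1}, …, y_n`.

That a polynomial `f` killed by the three maps lies in `J` is proved by reducing `f` modulo `J`
along binomial rewriting rules until only standard monomials are left. A standard monomial
containing `z` survives one of the two variable-killing maps, and the `z`-free standard monomials
have pairwise distinct toric images: the image of such a monomial determines its column sums
`x_j + y_j` and its number of `x`'s (a standard monomial divisible by `y_{k+1}` contains no `x`),
and since the `x`'s of a standard monomial precede its `y`'s, these determine the monomial.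
-/

open Finsupp (single weight)

theorem Ideal.sup_span_singleton_inf_eq_of_mul_mem {R : Type*} [CommRing R] {I : Ideal R}
    {g z : R} (hzg : z * g ∈ I)
    (hz : ∀ t, t * z ∈ I ⊔ Ideal.span {g} → t ∈ I ⊔ Ideal.span {g}) :
    (I ⊔ Ideal.span {g}) ⊓ (I ⊔ Ideal.span {z}) = I := by
  refine le_antisymm (fun f hf => ?_) (le_inf le_sup_left le_sup_left)
  obtain ⟨hfg, hfz⟩ := Submodule.mem_inf.mp hf
  obtain ⟨p, hp, _, ht, rfl⟩ := Submodule.mem_sup.mp hfz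
  obtain ⟨t, rfl⟩ := Ideal.mem_span_singleton'.mp ht
  have htg : t ∈ I ⊔ Ideal.span {g} :=
    hz t (by simpa using sub_mem hfg (Ideal.mem_sup_left hp))
  obtain ⟨q, hq, _, hs, rfl⟩ := Submodule.mem_sup.mp htg
  obtain ⟨s, rfl⟩ := Ideal.mem_span_singleton'.mp hs
  have hexp : (q + s * g) * z = q * z + s * (z * g) := by ring
  exact add_mem hp (hexp ▸ add_mem (I.mul_mem_right z hq) (I.mul_mem_left s hzg))

theorem map_eq_zero_of_mul_mem_of_le_ker {R S F : Type*} [CommRing R] [CommRing S] [IsDomain S]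
    [FunLike F R S] [RingHomClass F R S] {φ : F} {J : Ideal R} (hJ : J ≤ RingHom.ker φ)
    {t z : R} (hz : φ z ≠ 0) (h : t * z ∈ J) : φ t = 0 := by
  have := hJ h
  rw [RingHom.mem_ker, map_mul] at this
  exact (mul_eq_zero.mp this).resolve_right hz

section Sorted

variable {ι : Type*} [LinearOrder ι] [Fintype ι] {x y x' y' : ι → ℕ}

theorem le_of_add_eq_of_sum_eq_of_sorted (hadd : ∀ i, x i + y i = x' i + y' i)
    (hsum : ∑ i, x i = ∑ i, x' i) (hsort : ∀ p q, 0 < x p → 0 < y q → p ≤ q)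
    (hsort' : ∀ p q, 0 < x' p → 0 < y' q → p ≤ q) (j : ι) : x j ≤ x' j := by
  by_contra! hj
  obtain ⟨j', -, hj'⟩ : ∃ j' ∈ Finset.univ, x j' < x' j' := by
    by_contra! h
    exact (Finset.sum_lt_sum (fun i _ => h i (Finset.mem_univ i))
      ⟨j, Finset.mem_univ j, hj⟩).ne' hsum
  have hjj' : j ≤ j' := hsort j j' (by omega) (by have := hadd j'; omega)
  have hj'j : j' ≤ j := hsort' j' j (by omega) (by have := hadd j; omega)
  obtain rfl := le_antisymm hjj' hj'j
  omega

theorem eq_of_add_eq_of_sum_eq_of_sorted (hadd : ∀ i, x i + y i = x' i + y' i)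
    (hsum : ∑ i, x i = ∑ i, x' i) (hsort : ∀ p q, 0 < x p → 0 < y q → p ≤ q)
    (hsort' : ∀ p q, 0 < x' p → 0 < y' q → p ≤ q) : x = x' :=
  funext fun j => le_antisymm (le_of_add_eq_of_sum_eq_of_sorted hadd hsum hsort hsort' j)
    (le_of_add_eq_of_sum_eq_of_sorted (fun i => (hadd i).symm) hsum.symm hsort' hsort j)

end Sorted

namespace MvPolynomial

variable {σ τ K : Type*}

section CommSemiring

variable [CommSemiring K]

open Classical in
noncomputable def killOutside (T : Set σ) : MvPolynomial σ K →ₐ[K] MvPolynomial σ K :=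
  aeval fun s => if s ∈ T then X s else 0

variable {T : Set σ}

theorem killOutside_X_of_mem {s : σ} (hs : s ∈ T) :
    killOutside T (X s : MvPolynomial σ K) = X s := by
  simp [killOutside, hs]

theorem killOutside_monomial_of_subset {m : σ →₀ ℕ} (h : ↑m.support ⊆ T) (c : K) :
    killOutside T (monomial m c) = monomial m c := by
  classical
  rw [killOutside, aeval_monomial, monomial_eq, algebraMap_eq]
  exact congrArg _ (Finsupp.prod_congr fun s hs => by rw [if_pos (h hs)])

theorem killOutside_monomial_of_not_subset {m : σ →₀ ℕ} (h : ¬ ↑m.support ⊆ T) (c : K) :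
    killOutside T (monomial m c) = 0 := by
  classical
  obtain ⟨s, hs, hsT⟩ := Set.not_subset.mp h
  rw [killOutside, aeval_monomial, Finsupp.prod, Finset.prod_eq_zero hs, mul_zero]
  rw [if_neg hsT]
  exact zero_pow (Finsupp.mem_support_iff.mp hs)

theorem coeff_killOutside_of_subset {m : σ →₀ ℕ} (h : ↑m.support ⊆ T)
    (f : MvPolynomial σ K) : coeff m (killOutside T f) = coeff m f := by
  classical
  induction f using induction_on' with
  | monomial m' c =>
    by_cases h' : ↑m'.support ⊆ T
    · rw [killOutside_monomial_of_subset h']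
    · rw [killOutside_monomial_of_not_subset h', coeff_zero, coeff_monomial, if_neg]
      rintro rfl
      exact h' h
  | add p q hp hq => simp [hp, hq]

theorem aeval_monomial_one_monomial (w : σ → τ →₀ ℕ) (m : σ →₀ ℕ) (c : K) :
    aeval (fun s => monomial (w s) (1 : K)) (monomial m c) = monomial (weight w m) c := by
  rw [aeval_monomial, Finsupp.weight_apply, monomial_finsupp_sum_index, algebraMap_eq]
  simp [monomial_pow]

theorem coeff_weight_aeval_monomial_one {w : σ → τ →₀ ℕ} {f : MvPolynomial σ K}
    {m : σ →₀ ℕ} (hm : m ∈ f.support)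
    (hinj : Set.InjOn (weight w) (f.support : Set (σ →₀ ℕ))) :
    coeff (weight w m) (aeval (fun s => monomial (w s) (1 : K)) f) = coeff m f := by
  classical
  conv_lhs => rw [f.as_sum]
  rw [map_sum, coeff_sum, Finset.sum_eq_single m]
  · rw [aeval_monomial_one_monomial, coeff_monomial, if_pos rfl]
  · intro m' hm' hne
    rw [aeval_monomial_one_monomial, coeff_monomial, if_neg fun h => hne (hinj hm' hm h)]
  · exact fun h => absurd hm h

end CommSemiring

section CommRing

variable [CommRing K]

def IsStandardMonomial (J : Ideal (MvPolynomial σ K)) (w : σ → ℕ) (m : σ →₀ ℕ) :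
    Prop :=
  ∀ L R : σ →₀ ℕ, L ≤ m → weight w R < weight w L →
    monomial L (1 : K) - monomial R 1 ∉ J

variable {J : Ideal (MvPolynomial σ K)} {w : σ → ℕ}

theorem exists_monomial_sub_mem_isStandardMonomial (m : σ →₀ ℕ) (c : K) :
    ∃ v : MvPolynomial σ K, (∀ m' ∈ v.support, IsStandardMonomial J w m') ∧
      monomial m c - v ∈ J := by
  induction hN : weight w m using Nat.strong_induction_on generalizing m with
  | _ N ih =>
  by_cases hm : IsStandardMonomial J w m
  · refine ⟨monomial m c, fun m' hm' => ?_, by simp⟩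
    rwa [Finset.mem_singleton.mp (support_monomial_subset hm')]
  simp only [IsStandardMonomial, not_forall, not_not] at hm
  obtain ⟨L, R, hL, hw, hLR⟩ := hm
  have hdecr : weight w (m - L + R) < N := by
    rw [← hN, ← tsub_add_cancel_of_le hL, map_add, map_add, tsub_add_cancel_of_le hL]
    omega
  obtain ⟨v, hv, hsub⟩ := ih _ hdecr (m - L + R) rfl
  refine ⟨v, hv, ?_⟩
  have hstep : monomial m c - v =
      monomial (m - L) c * (monomial L 1 - monomial R 1) + (monomial (m - L + R) c - v) := by
    rw [mul_sub, monomial_mul, monomial_mul, mul_one, tsub_add_cancel_of_le hL]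
    ring
  rw [hstep]
  exact add_mem (J.mul_mem_left _ hLR) hsub

theorem exists_sub_mem_isStandardMonomial (f : MvPolynomial σ K) :
    ∃ v : MvPolynomial σ K, (∀ m ∈ v.support, IsStandardMonomial J w m) ∧ f - v ∈ J := by
  induction f using induction_on' with
  | monomial m c => exact exists_monomial_sub_mem_isStandardMonomial m c
  | add p q hp hq =>
    obtain ⟨v₁, hv₁, hp⟩ := hp
    obtain ⟨v₂, hv₂, hq⟩ := hq
    classical
    refine ⟨v₁ + v₂, fun m hm => ?_, by simpa [add_sub_add_comm] using add_mem hp hq⟩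
    rcases Finset.mem_union.mp (support_add hm) with hm | hm
    exacts [hv₁ m hm, hv₂ m hm]

namespace IsStandardMonomial

variable {m : σ →₀ ℕ} (h : IsStandardMonomial J w m)
include h

theorem eq_zero_of_X_sub_X_mem {s u : σ} (hw : w u < w s) (hJ : X s - X u ∈ J) : m s = 0 := by
  by_contra hm
  refine h (single s 1) (single u 1) (Finsupp.single_le_iff.mpr (Nat.one_le_iff_ne_zero.mpr hm))
    (by simpa [Finsupp.weight_single] using hw) hJ

theorem eq_zero_or_eq_zero_of_X_mul_X_sub_mem {s t u v : σ} (hst : s ≠ t)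
    (hw : w u + w v < w s + w t) (hJ : X s * X t - X u * X v ∈ J) : m s = 0 ∨ m t = 0 := by
  by_contra! hm
  refine h (single s 1 + single t 1) (single u 1 + single v 1) (Finsupp.le_def.mpr fun r => ?_)
    (by simpa [Finsupp.weight_single] using hw) (by simpa only [X, monomial_mul, mul_one] using hJ)
  classical
  simp only [Finsupp.add_apply, Finsupp.single_apply]
  split_ifs <;> subst_vars <;> first | omega | exact absurd rfl hst

end IsStandardMonomial

end CommRing

end MvPolynomial

namespace LkIdeal

/-- The variables of `S`, indexed from `0`: `x i` and `y i` stand for `x_{i+1}` and `y_{i+1}`. -/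
abbrev Var (n : ℕ) := Fin n ⊕ Fin n ⊕ Unit

namespace Var

variable {n : ℕ}

abbrev x (i : Fin n) : Var n := .inl i
abbrev y (i : Fin n) : Var n := .inr (.inl i)
abbrev z : Var n := .inr (.inr ())

end Var

open Var

variable {K : Type*} [Field K] {n : ℕ}

theorem xv_succ (i : Fin n) : xv K n (i + 1) = X (x i) := by
  simp [xv, Nat.succ_le_of_lt i.isLt]

theorem yv_succ (i : Fin n) : yv K n (i + 1) = X (y i) := by
  simp [yv, Nat.succ_le_of_lt i.isLt]

theorem exists_fin_val_add_one_eq {i : ℕ} (h₁ : 1 ≤ i) (h₂ : i ≤ n) :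
    ∃ i' : Fin n, (i' : ℕ) + 1 = i :=
  ⟨⟨i - 1, by omega⟩, by simp; omega⟩

theorem minor_mem (k : ℕ) {i j : Fin n} (hij : i ≤ j) :
    X (x j) * X (y i) - X (x i) * X (y j) ∈ LkIdeal K n k := by
  rcases hij.eq_or_lt with rfl | hij
  · simp
  refine Ideal.subset_span
    (.inl (.inl ⟨i + 1, j + 1, by omega, by simpa using hij, j.isLt, ?_⟩))
  rw [xv_succ, xv_succ, yv_succ, yv_succ]

theorem zy_mem {b i : Fin n} (hi : i < b) :
    X z * X (y i) - X (x i) * X (y b) ∈ LkIdeal K n b := by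
  refine Ideal.subset_span (.inr ⟨i + 1, by omega, by simpa using hi, ?_⟩)
  rw [xv_succ, yv_succ, yv_succ]; rfl

variable {a b : Fin n}

variable (K) in
/-- With `b = k` and `a = k - 1` this is `I + (x_{k+1} - y_k)`. -/
noncomputable def gluedIdeal (a b : Fin n) : Ideal (MvPolynomial (Var n) K) :=
  LkIdeal K n b ⊔ Ideal.span {X (x b) - X (y a)}

theorem x_mul_y_sub_mem_gluedIdeal (p : Fin n) :
    X (x p) * X (y b) - X (y a) * X (y p) ∈ gluedIdeal K a b := by
  have hglue : X (y p) * (X (x b) - X (y a)) ∈ gluedIdeal K a b :=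
    Ideal.mem_sup_right (Ideal.mul_mem_left _ _ (Ideal.mem_span_singleton_self _))
  rcases le_total p b with hpb | hbp
  · convert sub_mem hglue (Ideal.mem_sup_left (minor_mem (K := K) b hpb)) using 1
    ring
  · convert add_mem hglue (Ideal.mem_sup_left (minor_mem (K := K) b hbp)) using 1
    ring

/-- Column `i` of the toric parametrisation `x_i ↦ P c_i`, `y_i ↦ Q c_i` in the variables
`P = inl 0`, `Q = inl 1`, `T j = inr j`; the columns `c_a = P T_a` and `c_b = Q T_a` make
`x_b` and `y_a` both go to `P Q T_a`, which is also the image of `z`. -/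
noncomputable def colExp (a b i : Fin n) : Fin 2 ⊕ Fin n →₀ ℕ :=
  if i = a then single (.inl 0) 1 + single (.inr a) 1
  else if i = b then single (.inl 1) 1 + single (.inr a) 1 else single (.inr i) 1

noncomputable def toricExp (a b : Fin n) : Var n → Fin 2 ⊕ Fin n →₀ ℕ :=
  Sum.elim (fun i => single (.inl 0) 1 + colExp a b i)
    (Sum.elim (fun i => single (.inl 1) 1 + colExp a b i)
      fun _ => single (.inl 0) 1 + single (.inl 1) 1 + single (.inr a) 1)

variable (K) in
noncomputable def toric (a b : Fin n) :
    MvPolynomial (Var n) K →ₐ[K] MvPolynomial (Fin 2 ⊕ Fin n) K :=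
  aeval fun s => monomial (toricExp a b s) 1

def lowerVars (a : Fin n) : Set (Var n) := insert z (x '' Set.Iic a)

def upperVars (a : Fin n) : Set (Var n) := insert z (y '' Set.Ioi a)

theorem weight_toricExp_T {j : Fin n} (hja : j ≠ a) (hjb : j ≠ b) (m : Var n →₀ ℕ) :
    weight (toricExp a b) m (.inr j) = m (x j) + m (y j) := by
  have : (Finsupp.applyAddHom (.inr j)).comp (weight (R := ℕ) (toricExp a b)) =
      Finsupp.applyAddHom (x j) + Finsupp.applyAddHom (y j) := by
    ext (i | i | u) <;>
      simp [toricExp, colExp, Finsupp.weight_single, Finsupp.single_apply, Ne.symm hja] <;>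
      (try split_ifs) <;> simp_all
  simpa using DFunLike.congr_fun this m

theorem weight_toricExp_T_a (hab : a ≠ b) (m : Var n →₀ ℕ) :
    weight (toricExp a b) m (.inr a) = m (x a) + m (y a) + m (x b) + m (y b) + m z := by
  have : (Finsupp.applyAddHom (.inr a)).comp (weight (R := ℕ) (toricExp a b)) =
      Finsupp.applyAddHom (x a) + Finsupp.applyAddHom (y a) + Finsupp.applyAddHom (x b) +
        Finsupp.applyAddHom (y b) + Finsupp.applyAddHom z := by
    ext (i | i | u) <;> simp [toricExp, colExp, Finsupp.weight_single, Finsupp.single_apply] <;>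
      (try split_ifs) <;> simp_all
  simpa using DFunLike.congr_fun this m

theorem weight_toricExp_P (m : Var n →₀ ℕ) :
    weight (toricExp a b) m (.inl 0) = ∑ i, m (x i) + m (x a) + m (y a) + m z := by
  have : (Finsupp.applyAddHom (.inl 0)).comp (weight (R := ℕ) (toricExp a b)) =
      ∑ i, Finsupp.applyAddHom (x i) + Finsupp.applyAddHom (x a) + Finsupp.applyAddHom (y a) +
        Finsupp.applyAddHom z := by
    ext (i | i | u) <;> simp [toricExp, colExp, Finsupp.weight_single, Finsupp.single_apply] <;>
      (try split_ifs) <;> simp_all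
  simpa using DFunLike.congr_fun this m

def reductionWeight : Var n → ℕ := Sum.elim (fun i => i + 1) (Sum.elim 0 1)

variable (K) in
def IsStandard (a b : Fin n) (m : Var n →₀ ℕ) : Prop :=
  IsStandardMonomial (gluedIdeal K a b) reductionWeight m

namespace IsStandard

variable {m : Var n →₀ ℕ} (h : IsStandard K a b m)
include h

theorem apply_x_b_eq_zero : m (x b) = 0 :=
  h.eq_zero_of_X_sub_X_mem (u := y a) (by simp [reductionWeight])
    (Ideal.mem_sup_right (Ideal.mem_span_singleton_self _))

theorem apply_x_eq_zero_of_pos_y_b (hyb : 0 < m (y b)) (p : Fin n) : m (x p) = 0 :=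
  (h.eq_zero_or_eq_zero_of_X_mul_X_sub_mem (by simp) (by simp [reductionWeight])
    (x_mul_y_sub_mem_gluedIdeal p)).resolve_right hyb.ne'

theorem le_of_pos_x_of_pos_y {p q : Fin n} (hp : 0 < m (x p)) (hq : 0 < m (y q)) : p ≤ q := by
  by_contra! hqp
  have := h.eq_zero_or_eq_zero_of_X_mul_X_sub_mem (s := x p) (t := y q) (u := x q) (v := y p)
    (by simp) (by simpa [reductionWeight] using hqp) (Ideal.mem_sup_left (minor_mem _ hqp.le))
  omega

end IsStandard

variable (hab : (a : ℕ) + 1 = b)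
include hab

theorem zx_mem {j : Fin n} (hj : b ≤ j) :
    X z * X (x j) - X (x a) * X (y j) ∈ LkIdeal K n b := by
  refine Ideal.subset_span (.inl (.inr ⟨j + 1, by simpa using hj, j.isLt, ?_⟩))
  rw [← hab, xv_succ, xv_succ, yv_succ]; rfl

theorem z_mul_mem : X z * (X (x b) - X (y a)) ∈ LkIdeal K n b := by
  have hlt : a < b := by rw [Fin.lt_def]; omega
  convert sub_mem (zx_mem (K := K) hab le_rfl) (zy_mem (K := K) hlt) using 1
  ring

theorem z_mul_x_mul_y_sub_mem {p q : Fin n} (hp : p ≤ a) (hq : b ≤ q) :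
    X z * X (x p) * X (y q) - X (y a) * X (x p) * X (y q) ∈ LkIdeal K n b := by
  have hpq : p ≤ q := hp.trans (hq.trans' (by rw [Fin.le_def]; omega))
  have := add_mem (Ideal.mul_mem_left _ (-X z) (minor_mem (K := K) b hpq))
    (add_mem (Ideal.mul_mem_left _ (X (y p)) (zx_mem hab hq))
      (Ideal.mul_mem_left _ (X (y q)) (minor_mem b hp)))
  convert this using 1
  ring

theorem lkIdeal_le {J : Ideal (MvPolynomial (Var n) K)}
    (hminor : ∀ i j : Fin n, i < j → X (x j) * X (y i) - X (x i) * X (y j) ∈ J)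
    (hzx : ∀ j : Fin n, b ≤ j → X z * X (x j) - X (x a) * X (y j) ∈ J)
    (hzy : ∀ i : Fin n, i < b → X z * X (y i) - X (x i) * X (y b) ∈ J) :
    LkIdeal K n b ≤ J := by
  rw [LkIdeal, Ideal.span_le]
  rintro f ((⟨i, j, hi, hij, hj, rfl⟩ | ⟨j, hj, hjn, rfl⟩) | ⟨i, hi, hib, rfl⟩)
  · obtain ⟨i, rfl⟩ := exists_fin_val_add_one_eq hi (hij.le.trans hj)
    obtain ⟨j, rfl⟩ := exists_fin_val_add_one_eq (by omega) hj
    rw [xv_succ, xv_succ, yv_succ, yv_succ]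
    exact hminor i j (by simpa using hij)
  · obtain ⟨j, rfl⟩ := exists_fin_val_add_one_eq (by omega) hjn
    rw [← hab, xv_succ, xv_succ, yv_succ]
    exact hzx j (by simpa using hj)
  · obtain ⟨i, rfl⟩ := exists_fin_val_add_one_eq (n := n) hi (by omega)
    rw [xv_succ, yv_succ, yv_succ]
    exact hzy i (by rw [Fin.lt_def]; omega)

theorem gluedIdeal_le {J : Ideal (MvPolynomial (Var n) K)}
    (hminor : ∀ i j : Fin n, i < j → X (x j) * X (y i) - X (x i) * X (y j) ∈ J)
    (hzx : ∀ j : Fin n, b ≤ j → X z * X (x j) - X (x a) * X (y j) ∈ J)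
    (hzy : ∀ i : Fin n, i < b → X z * X (y i) - X (x i) * X (y b) ∈ J)
    (hglue : X (x b) - X (y a) ∈ J) : gluedIdeal K a b ≤ J :=
  sup_le (lkIdeal_le hab hminor hzx hzy) (Ideal.span_singleton_le_iff_mem J |>.mpr hglue)

theorem gluedIdeal_le_ker_toric : gluedIdeal K a b ≤ RingHom.ker (toric K a b) := by
  have hab' : a ≠ b := by rintro rfl; omega
  have hX (s t : Var n) :
      toric K a b (X s * X t) = monomial (toricExp a b s + toricExp a b t) 1 := by
    simp [toric, monomial_mul]
  refine gluedIdeal_le hab (fun i j _ => ?_) (fun j _ => ?_) (fun i _ => ?_) ?_ <;>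
    simp only [RingHom.mem_ker, map_sub, hX, sub_eq_zero]
  · congr 2; simp only [toricExp, Sum.elim_inl, Sum.elim_inr]; abel
  · congr 2; simp [toricExp, colExp]; abel
  · congr 2; simp [toricExp, colExp, hab'.symm]; abel
  · simp [toric, toricExp, colExp, hab'.symm]; abel

theorem gluedIdeal_le_ker_killOutside_lowerVars :
    gluedIdeal K a b ≤ RingHom.ker (killOutside (K := K) (lowerVars a)) := by
  have hab' : a < b := by rw [Fin.lt_def]; omega
  refine gluedIdeal_le hab (fun i j _ => ?_) (fun j hj => ?_) (fun i _ => ?_) ?_ <;>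
    simp [killOutside, lowerVars]
  exacts [hab'.trans_le hj, hab']

theorem gluedIdeal_le_ker_killOutside_upperVars :
    gluedIdeal K a b ≤ RingHom.ker (killOutside (K := K) (upperVars a)) := by
  refine gluedIdeal_le hab (fun i j _ => ?_) (fun j _ => ?_) (fun i hi => ?_) ?_ <;>
    simp [killOutside, upperVars]
  rw [Fin.lt_def] at hi
  rw [Fin.le_def]
  omega

namespace IsStandard

variable {m : Var n →₀ ℕ} (h : IsStandard K a b m) (hz : 0 < m z)
include h hz

theorem apply_y_eq_zero_of_le {q : Fin n} (hq : q ≤ a) : m (y q) = 0 := by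
  have hmem : X z * X (y q) - X (y a) * X (y q) ∈ gluedIdeal K a b := by
    have hzy : X z * X (y q) - X (x q) * X (y b) ∈ gluedIdeal K a b :=
      Ideal.mem_sup_left (zy_mem (by rw [Fin.lt_def]; rw [Fin.le_def] at hq; omega))
    convert add_mem hzy (x_mul_y_sub_mem_gluedIdeal q) using 1
    ring
  have := h.eq_zero_or_eq_zero_of_X_mul_X_sub_mem (by simp) (by simp [reductionWeight]) hmem
  omega

theorem apply_x_eq_zero_of_lt {p : Fin n} (hp : b < p) : m (x p) = 0 := by
  have := h.eq_zero_or_eq_zero_of_X_mul_X_sub_mem (by simp)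
    (by simp [reductionWeight]; rw [Fin.lt_def] at hp; omega)
    (Ideal.mem_sup_left (zx_mem (K := K) hab hp.le))
  omega

theorem apply_x_eq_zero_or_apply_y_eq_zero {p q : Fin n} (hp : p ≤ a) (hq : b < q) :
    m (x p) = 0 ∨ m (y q) = 0 := by
  classical
  by_contra! hm
  have hJ : X z * X (x p) * X (y q) - X (y a) * X (x p) * X (y q) ∈ gluedIdeal K a b :=
    Ideal.mem_sup_left (z_mul_x_mul_y_sub_mem hab hp hq.le)
  refine h (single z 1 + single (x p) 1 + single (y q) 1)
    (single (y a) 1 + single (x p) 1 + single (y q) 1) (Finsupp.le_def.mpr fun r => ?_)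
    (by simp [Finsupp.weight_single, reductionWeight])
    (by simpa only [X, monomial_mul, mul_one] using hJ)
  simp only [Finsupp.add_apply, Finsupp.single_apply]
  split_ifs <;> subst_vars <;> simp_all <;> omega

theorem le_of_pos_x {p : Fin n} (hp : 0 < m (x p)) : p ≤ a := by
  by_contra! hap
  rcases (show p = b ∨ b < p by rw [Fin.lt_def] at hap; rw [Fin.lt_def, Fin.ext_iff]; omega)
    with rfl | hbp
  · exact hp.ne' h.apply_x_b_eq_zero
  · exact hp.ne' (h.apply_x_eq_zero_of_lt hab hz hbp)

theorem support_subset : ↑m.support ⊆ lowerVars a ∨ ↑m.support ⊆ upperVars a := by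
  by_cases hx : ∃ p, 0 < m (x p)
  · obtain ⟨p, hp⟩ := hx
    have hpa := h.le_of_pos_x hab hz hp
    left
    rintro (i | i | u) hs <;> simp only [Finset.mem_coe, Finsupp.mem_support_iff] at hs
    · exact Set.mem_insert_of_mem _ ⟨i, h.le_of_pos_x hab hz (Nat.pos_of_ne_zero hs), rfl⟩
    · exfalso
      rcases le_or_gt i a with hia | hai
      · exact hs (h.apply_y_eq_zero_of_le hab hz hia)
      rcases (show i = b ∨ b < i by rw [Fin.lt_def] at hai; rw [Fin.lt_def, Fin.ext_iff]; omega)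
        with rfl | hbi
      · exact hp.ne' (h.apply_x_eq_zero_of_pos_y_b (Nat.pos_of_ne_zero hs) p)
      · exact (h.apply_x_eq_zero_or_apply_y_eq_zero hab hz hpa hbi).elim hp.ne' hs
    · exact Set.mem_insert _ _
  · simp only [not_exists, not_lt, nonpos_iff_eq_zero] at hx
    right
    rintro (i | i | u) hs <;> simp only [Finset.mem_coe, Finsupp.mem_support_iff] at hs
    · exact absurd (hx i) hs
    · refine Set.mem_insert_of_mem _ ⟨i, Set.mem_Ioi.mpr ?_, rfl⟩
      by_contra! hia
      exact hs (h.apply_y_eq_zero_of_le hab hz hia)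
    · exact Set.mem_insert _ _

end IsStandard

theorem IsStandard.eq_of_weight_toricExp_eq {m m' : Var n →₀ ℕ} (h : IsStandard K a b m)
    (h' : IsStandard K a b m') (hz : m z = 0) (hz' : m' z = 0)
    (heq : weight (toricExp a b) m = weight (toricExp a b) m') : m = m' := by
  have hab' : a ≠ b := by rintro rfl; omega
  have hxb := h.apply_x_b_eq_zero
  have hxb' := h'.apply_x_b_eq_zero
  have hP := DFunLike.congr_fun heq (.inl 0)
  have hTa := DFunLike.congr_fun heq (.inr a)
  rw [weight_toricExp_P, weight_toricExp_P] at hP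
  rw [weight_toricExp_T_a hab', weight_toricExp_T_a hab'] at hTa
  have hsum {m : Var n →₀ ℕ} (h : IsStandard K a b m) (hy : 0 < m (y b)) :
      ∑ i, m (x i) = 0 :=
    Finset.sum_eq_zero fun p _ => h.apply_x_eq_zero_of_pos_y_b hy p
  have hyb : m (y b) = m' (y b) := by
    rcases lt_trichotomy (m (y b)) (m' (y b)) with hlt | heq | hlt
    · have := hsum h' (by omega); omega
    · exact heq
    · have := hsum h (by omega); omega
  have hcol : ∀ j, m (x j) + m (y j) = m' (x j) + m' (y j) := by
    intro j
    by_cases hjb : j = b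
    · subst hjb; omega
    by_cases hja : j = a
    · subst hja; omega
    simpa [weight_toricExp_T hja hjb] using DFunLike.congr_fun heq (.inr j)
  have hx : (fun j => m (x j)) = fun j => m' (x j) :=
    eq_of_add_eq_of_sum_eq_of_sorted hcol (by omega) (fun _ _ => h.le_of_pos_x_of_pos_y)
      (fun _ _ => h'.le_of_pos_x_of_pos_y)
  ext (i | i | u)
  · exact congrFun hx i
  · show m (y i) = m' (y i)
    have := hcol i
    have := congrFun hx i
    omega
  · exact hz.trans hz'.symm

theorem eq_zero_of_forall_isStandard {v : MvPolynomial (Var n) K}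
    (hv : ∀ m ∈ v.support, IsStandard K a b m) (h₁ : toric K a b v = 0)
    (h₂ : killOutside (lowerVars a) v = 0) (h₃ : killOutside (upperVars a) v = 0) : v = 0 := by
  have hz : ∀ m ∈ v.support, m z = 0 := by
    intro m hm
    by_contra hzm
    apply mem_support_iff.mp hm
    rcases (hv m hm).support_subset hab (Nat.pos_of_ne_zero hzm) with hs | hs
    · rw [← coeff_killOutside_of_subset hs, h₂, coeff_zero]
    · rw [← coeff_killOutside_of_subset hs, h₃, coeff_zero]
  by_contra hne
  obtain ⟨m, hm⟩ := support_nonempty.mpr hne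
  have := coeff_weight_aeval_monomial_one hm fun m₁ hm₁ m₂ hm₂ =>
    (hv m₁ hm₁).eq_of_weight_toricExp_eq hab (hv m₂ hm₂) (hz m₁ hm₁) (hz m₂ hm₂)
  rw [← toric, h₁, coeff_zero] at this
  exact mem_support_iff.mp hm this.symm

theorem mem_gluedIdeal_of_map_eq_zero {f : MvPolynomial (Var n) K} (h₁ : toric K a b f = 0)
    (h₂ : killOutside (lowerVars a) f = 0) (h₃ : killOutside (upperVars a) f = 0) :
    f ∈ gluedIdeal K a b := by
  obtain ⟨v, hv, hfv⟩ := exists_sub_mem_isStandardMonomial (J := gluedIdeal K a b)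
    (w := reductionWeight) f
  have hv0 : v = 0 := eq_zero_of_forall_isStandard hab hv
    (by simpa [h₁] using gluedIdeal_le_ker_toric hab hfv)
    (by simpa [h₂] using gluedIdeal_le_ker_killOutside_lowerVars hab hfv)
    (by simpa [h₃] using gluedIdeal_le_ker_killOutside_upperVars hab hfv)
  simpa [hv0] using hfv

theorem mem_gluedIdeal_of_mul_z_mem {t : MvPolynomial (Var n) K}
    (ht : t * X z ∈ gluedIdeal K a b) : t ∈ gluedIdeal K a b :=
  mem_gluedIdeal_of_map_eq_zero hab
    (map_eq_zero_of_mul_mem_of_le_ker (gluedIdeal_le_ker_toric hab) (by simp [toric]) ht)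
    (map_eq_zero_of_mul_mem_of_le_ker (gluedIdeal_le_ker_killOutside_lowerVars hab)
      (by simp [killOutside_X_of_mem, lowerVars]) ht)
    (map_eq_zero_of_mul_mem_of_le_ker (gluedIdeal_le_ker_killOutside_upperVars hab)
      (by simp [killOutside_X_of_mem, upperVars]) ht)

end LkIdeal

theorem LkIdeal_eq_inter_general (K : Type*) [Field K] (n k : ℕ)
    (hk1 : 1 ≤ k) (hk2 : k ≤ n - 1) :
    LkIdeal K n k =
      (LkIdeal K n k ⊔ Ideal.span {xv K n (k + 1) - yv K n k}) ⊓
        (LkIdeal K n k ⊔ Ideal.span {zv K n}) := by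
  let a : Fin n := ⟨k - 1, by omega⟩
  let b : Fin n := ⟨k, by omega⟩
  have hab : (a : ℕ) + 1 = b := by simp [a, b]; omega
  have hglue : xv K n (k + 1) - yv K n k = X (LkIdeal.Var.x b) - X (LkIdeal.Var.y a) := by
    rw [← LkIdeal.xv_succ, ← LkIdeal.yv_succ, hab]
  rw [hglue]
  exact (Ideal.sup_span_singleton_inf_eq_of_mul_mem (LkIdeal.z_mul_mem hab)
    fun t ht => LkIdeal.mem_gluedIdeal_of_mul_z_mem hab ht).symm

/-- **Lemma.** For every `1 ≤ k ≤ n−1`, `I = (I + (x_{k+1} − y_k)) ∩ (I + (z))` where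
`I = I_{L_k}`. -/
theorem LkIdeal_eq_inter (K : Type*) [Field K] (n k : ℕ)
    (hn : 2 ≤ n) (hk1 : 1 ≤ k) (hk2 : k ≤ n - 1) :
    LkIdeal K n k =
      (LkIdeal K n k ⊔ Ideal.span {xv K n (k + 1) - yv K n k}) ⊓
        (LkIdeal K n k ⊔ Ideal.span {zv K n}) :=
  LkIdeal_eq_inter_general K n k hk1 hk2
end

section
/- For every 1 ≤ k ≤ n−1, the ideal I + (z) of S = K[x_1,…,x_n, y_1,…,y_n, z], generated by I = I_{L_k} together with the variable z, is a radical ideal. -/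
open MvPolynomial

namespace LkAux

variable {K : Type*} [Field K] {n k : ℕ}

/-- the big ideal `I + (z)` -/
noncomputable def JJ (K : Type*) [Field K] (n k : ℕ) :
    Ideal (MvPolynomial (Fin n ⊕ Fin n ⊕ Unit) K) :=
  LkIdeal K n k ⊔ Ideal.span {zv K n}

lemma xv_fin (i : Fin n) : xv K n (i.1 + 1) = X (Sum.inl i) := by
  rw [xv, dif_pos ⟨by omega, by omega⟩]
  simp

lemma yv_fin (i : Fin n) : yv K n (i.1 + 1) = X (Sum.inr (Sum.inl i)) := by
  rw [yv, dif_pos ⟨by omega, by omega⟩]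
  simp

lemma z_mem : zv K n ∈ JJ K n k :=
  Ideal.mem_sup_right (Ideal.subset_span rfl)

lemma minor_mem (i j : Fin n) (hij : i < j) :
    X (Sum.inl j) * X (Sum.inr (Sum.inl i)) - X (Sum.inl i) * X (Sum.inr (Sum.inl j))
      ∈ JJ K n k := by
  refine Ideal.mem_sup_left (Ideal.subset_span ?_)
  refine Or.inl (Or.inl ⟨i.1 + 1, j.1 + 1, by omega, by omega, by omega, ?_⟩)
  rw [xv_fin, yv_fin, xv_fin, yv_fin]

lemma forb1_mem (hn : 2 ≤ n) (hk1 : 1 ≤ k) (hk2 : k ≤ n - 1) (j : Fin n)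
    (hj : k - 1 < j.1) :
    X (Sum.inl (⟨k - 1, by omega⟩ : Fin n)) * X (Sum.inr (Sum.inl j)) ∈ JJ K n k := by
  have h1 : zv K n * xv K n (j.1 + 1) ∈ JJ K n k :=
    Ideal.mul_mem_right _ _ z_mem
  have h2 : zv K n * xv K n (j.1 + 1) - xv K n k * yv K n (j.1 + 1) ∈ JJ K n k := by
    refine Ideal.mem_sup_left (Ideal.subset_span ?_)
    exact Or.inl (Or.inr ⟨j.1 + 1, by omega, by omega, rfl⟩)
  have h3 := Ideal.sub_mem _ h1 h2
  simp only [sub_sub_cancel] at h3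
  rwa [yv_fin, xv, dif_pos ⟨hk1, by omega⟩] at h3

lemma forb2_mem (hn : 2 ≤ n) (hk1 : 1 ≤ k) (hk2 : k ≤ n - 1) (j : Fin n)
    (hj : k - 1 < j.1) :
    X (Sum.inl j) * X (Sum.inr (Sum.inl (⟨k - 1, by omega⟩ : Fin n))) ∈ JJ K n k := by
  have h1 := forb1_mem (K := K) hn hk1 hk2 j hj
  have h2 : (⟨k - 1, by omega⟩ : Fin n) < j := by
    rw [Fin.lt_def]; exact hj
  have h3 := minor_mem (K := K) (k := k) (⟨k - 1, by omega⟩ : Fin n) j h2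
  have := Ideal.add_mem _ h3 h1
  simpa using this

lemma forb3_mem (hn : 2 ≤ n) (hk1 : 1 ≤ k) (hk2 : k ≤ n - 1) (i : Fin n)
    (hi : i.1 < k) :
    X (Sum.inl i) * X (Sum.inr (Sum.inl (⟨k, by omega⟩ : Fin n))) ∈ JJ K n k := by
  have h1 : zv K n * yv K n (i.1 + 1) ∈ JJ K n k :=
    Ideal.mul_mem_right _ _ z_mem
  have h2 : zv K n * yv K n (i.1 + 1) - xv K n (i.1 + 1) * yv K n (k + 1) ∈ JJ K n k := by
    refine Ideal.mem_sup_left (Ideal.subset_span ?_)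
    exact Or.inr ⟨i.1 + 1, by omega, by omega, rfl⟩
  have h3 := Ideal.sub_mem _ h1 h2
  simp only [sub_sub_cancel] at h3
  rwa [xv_fin, yv, dif_pos ⟨by omega, by omega⟩] at h3

lemma forb4_mem (hn : 2 ≤ n) (hk1 : 1 ≤ k) (hk2 : k ≤ n - 1) (i : Fin n)
    (hi : i.1 < k) :
    X (Sum.inl (⟨k, by omega⟩ : Fin n)) * X (Sum.inr (Sum.inl i)) ∈ JJ K n k := by
  have h1 := forb3_mem (K := K) hn hk1 hk2 i hi
  have h2 : i < (⟨k, by omega⟩ : Fin n) := by rw [Fin.lt_def]; exact hi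
  have h3 := minor_mem (K := K) (k := k) i (⟨k, by omega⟩ : Fin n) h2
  have := Ideal.add_mem _ h3 h1
  simpa using this


/-! ### Exponent combinatorics -/

open Finsupp

noncomputable def swapExp (d : (Fin n ⊕ Fin n ⊕ Unit) →₀ ℕ) (u w : Fin n) :
    (Fin n ⊕ Fin n ⊕ Unit) →₀ ℕ :=
  d - Finsupp.single (Sum.inl u) 1 - Finsupp.single (Sum.inr (Sum.inl w)) 1
    + Finsupp.single (Sum.inl w) 1 + Finsupp.single (Sum.inr (Sum.inl u)) 1

lemma swapExp_inl (d : (Fin n ⊕ Fin n ⊕ Unit) →₀ ℕ) (u w t : Fin n) :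
    swapExp d u w (Sum.inl t)
      = d (Sum.inl t) - (if u = t then 1 else 0) + (if w = t then 1 else 0) := by
  simp [swapExp, Finsupp.tsub_apply, Finsupp.single_apply]

lemma swapExp_inrl (d : (Fin n ⊕ Fin n ⊕ Unit) →₀ ℕ) (u w t : Fin n) :
    swapExp d u w (Sum.inr (Sum.inl t))
      = d (Sum.inr (Sum.inl t)) - (if w = t then 1 else 0) + (if u = t then 1 else 0) := by
  simp [swapExp, Finsupp.tsub_apply, Finsupp.single_apply]

lemma swapExp_inrr (d : (Fin n ⊕ Fin n ⊕ Unit) →₀ ℕ) (u w : Fin n) :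
    swapExp d u w (Sum.inr (Sum.inr ())) = d (Sum.inr (Sum.inr ())) := by
  simp [swapExp, Finsupp.tsub_apply, Finsupp.single_apply]

lemma factor_mem (d : (Fin n ⊕ Fin n ⊕ Unit) →₀ ℕ) {a b : Fin n ⊕ Fin n ⊕ Unit}
    (ha : d a ≠ 0) (hb : d b ≠ 0) (hab : a ≠ b)
    (h : (X a : MvPolynomial (Fin n ⊕ Fin n ⊕ Unit) K) * X b ∈ JJ K n k) :
    monomial d (1 : K) ∈ JJ K n k := by
  have hle : Finsupp.single a 1 + Finsupp.single b 1 ≤ d := by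
    intro s
    rcases eq_or_ne s a with rfl | hsa
    · simp [Finsupp.single_apply, hab.symm]; omega
    · rcases eq_or_ne s b with rfl | hsb
      · simp [Finsupp.single_apply, hab, hsa.symm]; omega
      · simp [Finsupp.single_apply, hsa.symm, hsb.symm]
  have hXX : (X a : MvPolynomial (Fin n ⊕ Fin n ⊕ Unit) K) * X b
      = monomial (Finsupp.single a 1 + Finsupp.single b 1) 1 := by
    rw [X, X, monomial_mul, one_mul]
  have hfac : monomial d (1 : K)
      = monomial (d - (Finsupp.single a 1 + Finsupp.single b 1)) 1 * (X a * X b) := by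
    rw [hXX, monomial_mul, one_mul, tsub_add_cancel_of_le hle]
  rw [hfac]
  exact Ideal.mul_mem_left _ _ h

lemma swap_cong (hn : 2 ≤ n) (d : (Fin n ⊕ Fin n ⊕ Unit) →₀ ℕ) (u w : Fin n)
    (hu : d (Sum.inl u) ≠ 0) (hw : d (Sum.inr (Sum.inl w)) ≠ 0) :
    monomial d (1 : K) - monomial (swapExp d u w) 1 ∈ JJ K n k := by
  rcases eq_or_ne u w with rfl | huw
  · have : swapExp d u u = d := by
      ext s
      rcases s with t | t | t
      · rw [swapExp_inl]
        rcases eq_or_ne u t with rfl | h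
        · simp; omega
        · simp [h]
      · rw [swapExp_inrl]
        rcases eq_or_ne u t with rfl | h
        · simp; omega
        · simp [h]
      · rw [swapExp_inrr]
    rw [this, sub_self]
    exact Ideal.zero_mem _
  · have hle : Finsupp.single (Sum.inl u) 1 + Finsupp.single (Sum.inr (Sum.inl w)) 1 ≤ d := by
      intro s
      rcases eq_or_ne s (Sum.inl u) with rfl | hsa
      · simp [Finsupp.single_apply]; omega
      · rcases eq_or_ne s (Sum.inr (Sum.inl w)) with rfl | hsb
        · simp [Finsupp.single_apply]; omega
        · simp [Finsupp.single_apply, Ne.symm hsa, Ne.symm hsb]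
    set Sg := Finsupp.single (Sum.inl u : Fin n ⊕ Fin n ⊕ Unit) 1
      + Finsupp.single (Sum.inr (Sum.inl w)) 1 with hSg
    have h1 : monomial d (1 : K)
        = monomial (d - Sg) 1 * (X (Sum.inl u) * X (Sum.inr (Sum.inl w))) := by
      rw [X, X, monomial_mul, one_mul, monomial_mul, one_mul, tsub_add_cancel_of_le hle]
    have h2 : swapExp d u w
        = (d - Sg) + (Finsupp.single (Sum.inl w) 1 + Finsupp.single (Sum.inr (Sum.inl u)) 1) := by
      rw [swapExp, hSg, tsub_add_eq_tsub_tsub]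
      abel_nf
      rw [add_assoc]
    have h3 : monomial (swapExp d u w) (1 : K)
        = monomial (d - Sg) 1 * (X (Sum.inl w) * X (Sum.inr (Sum.inl u))) := by
      rw [h2, X, X, monomial_mul, one_mul, monomial_mul, one_mul]
    rw [h1, h3, ← mul_sub]
    rcases lt_or_gt_of_ne huw with h | h
    · have hm := minor_mem (K := K) (k := k) u w h
      have : (X (Sum.inl u) : MvPolynomial (Fin n ⊕ Fin n ⊕ Unit) K) * X (Sum.inr (Sum.inl w))
          - X (Sum.inl w) * X (Sum.inr (Sum.inl u))
          = -(X (Sum.inl w) * X (Sum.inr (Sum.inl u))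
            - X (Sum.inl u) * X (Sum.inr (Sum.inl w))) := by ring
      rw [this]
      refine Ideal.mul_mem_left _ _ ?_
      have := Ideal.sub_mem _ (Ideal.zero_mem (JJ K n k)) hm
      simpa using this
    · exact Ideal.mul_mem_left _ _ (minor_mem w u h)

/-- the measure used for termination -/
noncomputable def μd (d : (Fin n ⊕ Fin n ⊕ Unit) →₀ ℕ) : ℕ :=
  ∑ t : Fin n, t.1 * d (Sum.inl t)

lemma μ_swap_lt (d : (Fin n ⊕ Fin n ⊕ Unit) →₀ ℕ) (i j : Fin n) (hij : i < j)
    (hj : d (Sum.inl j) ≠ 0) : μd (swapExp d j i) + j.1 = μd d + i.1 := by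
  have key : ∀ t : Fin n, swapExp d j i (Sum.inl t) + (if j = t then 1 else 0)
      = d (Sum.inl t) + (if i = t then 1 else 0) := by
    intro t
    rw [swapExp_inl]
    rcases eq_or_ne j t with rfl | h1
    · rcases eq_or_ne i j with rfl | h2
      · exact absurd hij (lt_irrefl i)
      · simp [h2]
        omega
    · simp only [if_neg h1]
      rcases eq_or_ne i t with rfl | h2
      · simp
      · simp [h2]
  have hsum : ∑ t : Fin n, t.1 * (swapExp d j i (Sum.inl t) + (if j = t then 1 else 0))
      = ∑ t : Fin n, t.1 * (d (Sum.inl t) + (if i = t then 1 else 0)) :=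
    Finset.sum_congr rfl fun t _ => by rw [key t]
  have e1 : ∑ t : Fin n, t.1 * (swapExp d j i (Sum.inl t) + (if j = t then 1 else 0))
      = μd (swapExp d j i) + j.1 := by
    simp [μd, mul_add, Finset.sum_add_distrib, mul_ite, mul_one, mul_zero,
      Finset.sum_ite_eq]
  have e2 : ∑ t : Fin n, t.1 * (d (Sum.inl t) + (if i = t then 1 else 0))
      = μd d + i.1 := by
    simp [μd, mul_add, Finset.sum_add_distrib, mul_ite, mul_one, mul_zero,
      Finset.sum_ite_eq]
  omega


/-! ### Normality predicates -/

def cdeg (d : (Fin n ⊕ Fin n ⊕ Unit) →₀ ℕ) (i : Fin n) : ℕ :=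
  d (Sum.inl i) + d (Sum.inr (Sum.inl i))

def noInv (d : (Fin n ⊕ Fin n ⊕ Unit) →₀ ℕ) : Prop :=
  ∀ i j : Fin n, i < j → d (Sum.inl j) = 0 ∨ d (Sum.inr (Sum.inl i)) = 0

def classForb (k : ℕ) (d : (Fin n ⊕ Fin n ⊕ Unit) →₀ ℕ) : Prop :=
  (∃ i, d (Sum.inl i) ≠ 0) ∧ (∃ i, d (Sum.inr (Sum.inl i)) ≠ 0) ∧
    (((∃ i, i.1 = k - 1 ∧ cdeg d i ≠ 0) ∧ (∃ j, k - 1 < j.1 ∧ cdeg d j ≠ 0)) ∨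
     ((∃ i, i.1 = k ∧ cdeg d i ≠ 0) ∧ (∃ i, i.1 < k ∧ cdeg d i ≠ 0)))

def forbDiv (k : ℕ) (d : (Fin n ⊕ Fin n ⊕ Unit) →₀ ℕ) : Prop :=
  (∃ i j : Fin n, i.1 = k - 1 ∧ k - 1 < j.1 ∧ d (Sum.inl i) ≠ 0 ∧ d (Sum.inr (Sum.inl j)) ≠ 0) ∨
  (∃ i j : Fin n, i.1 = k - 1 ∧ k - 1 < j.1 ∧ d (Sum.inl j) ≠ 0 ∧ d (Sum.inr (Sum.inl i)) ≠ 0) ∨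
  (∃ i j : Fin n, i.1 < k ∧ j.1 = k ∧ d (Sum.inl i) ≠ 0 ∧ d (Sum.inr (Sum.inl j)) ≠ 0) ∨
  (∃ i j : Fin n, i.1 < k ∧ j.1 = k ∧ d (Sum.inl j) ≠ 0 ∧ d (Sum.inr (Sum.inl i)) ≠ 0)

def NormalE (k : ℕ) (d : (Fin n ⊕ Fin n ⊕ Unit) →₀ ℕ) : Prop :=
  d (Sum.inr (Sum.inr ())) = 0 ∧ noInv d ∧ ¬ classForb k d

lemma forbDiv_mem (hn : 2 ≤ n) (hk1 : 1 ≤ k) (hk2 : k ≤ n - 1)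
    (d : (Fin n ⊕ Fin n ⊕ Unit) →₀ ℕ) (h : forbDiv k d) :
    monomial d (1 : K) ∈ JJ K n k := by
  rcases h with ⟨i, j, hi, hj, h1, h2⟩ | ⟨i, j, hi, hj, h1, h2⟩ |
    ⟨i, j, hi, hj, h1, h2⟩ | ⟨i, j, hi, hj, h1, h2⟩
  · refine factor_mem d h1 h2 (by simp) ?_
    have : i = (⟨k - 1, by omega⟩ : Fin n) := Fin.ext hi
    rw [this]
    exact forb1_mem hn hk1 hk2 j hj
  · refine factor_mem d h1 h2 (by simp) ?_
    have : i = (⟨k - 1, by omega⟩ : Fin n) := Fin.ext hi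
    rw [this]
    exact forb2_mem hn hk1 hk2 j hj
  · refine factor_mem d h1 h2 (by simp) ?_
    have : j = (⟨k, by omega⟩ : Fin n) := Fin.ext hj
    rw [this]
    exact forb3_mem hn hk1 hk2 i hi
  · refine factor_mem d h1 h2 (by simp) ?_
    have : j = (⟨k, by omega⟩ : Fin n) := Fin.ext hj
    rw [this]
    exact forb4_mem hn hk1 hk2 i hi

lemma escape (d : (Fin n ⊕ Fin n ⊕ Unit) →₀ ℕ)
    (hni : noInv d) (hnf : ¬ forbDiv k d) (hcf : classForb k d) :
    ∃ u w : Fin n, d (Sum.inl u) ≠ 0 ∧ d (Sum.inr (Sum.inl w)) ≠ 0 ∧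
      forbDiv k (swapExp d u w) := by
  obtain ⟨⟨mA, hmA⟩, ⟨mB, hmB⟩, hdisj⟩ := hcf
  rcases hdisj with ⟨⟨κ1, hκ1, hc1⟩, ⟨j, hjgt, hcj⟩⟩ | ⟨⟨κ2, hκ2, hc2⟩, ⟨i, hilt, hci⟩⟩
  · -- case 1 : c κ1 ≠ 0 and some c j ≠ 0 with j > κ1
    have hjne : κ1 < j := by rw [Fin.lt_def]; omega
    have hAκ1 : d (Sum.inl κ1) = 0 := by
      by_contra hA
      have hBall : ∀ m : Fin n, d (Sum.inr (Sum.inl m)) ≠ 0 → m = κ1 := by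
        intro m hm
        rcases lt_trichotomy m κ1 with h | h | h
        · rcases hni m κ1 h with h' | h'
          · exact absurd h' hA
          · exact absurd h' hm
        · exact h
        · exact absurd (Or.inl ⟨κ1, m, hκ1, by rw [Fin.lt_def] at h; omega, hA, hm⟩) hnf
      have hBκ1 : d (Sum.inr (Sum.inl κ1)) ≠ 0 := by
        have := hBall mB hmB
        rwa [this] at hmB
      by_cases hAj : d (Sum.inl j) = 0
      · have hBj : d (Sum.inr (Sum.inl j)) ≠ 0 := by
          unfold cdeg at hcj; omega
        exact absurd (Or.inl ⟨κ1, j, hκ1, hjgt, hA, hBj⟩) hnf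
      · rcases hni κ1 j hjne with h' | h'
        · exact absurd h' hAj
        · exact absurd h' hBκ1
    have hBκ1 : d (Sum.inr (Sum.inl κ1)) ≠ 0 := by
      unfold cdeg at hc1; omega
    have hmAlt : mA < κ1 := by
      rcases lt_trichotomy mA κ1 with h | h | h
      · exact h
      · rw [h] at hmA; exact absurd hAκ1 hmA
      · rcases hni κ1 mA h with h' | h'
        · exact absurd h' hmA
        · exact absurd h' hBκ1
    have hBj : d (Sum.inr (Sum.inl j)) ≠ 0 := by
      by_contra h
      have hAj : d (Sum.inl j) ≠ 0 := by unfold cdeg at hcj; omega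
      rcases hni κ1 j hjne with h' | h'
      · exact absurd h' hAj
      · exact absurd h' hBκ1
    refine ⟨mA, κ1, hmA, hBκ1, Or.inl ⟨κ1, j, hκ1, hjgt, ?_, ?_⟩⟩
    · rw [swapExp_inl, if_neg (ne_of_lt hmAlt), if_pos rfl]
      omega
    · rw [swapExp_inrl, if_neg (ne_of_lt hjne), if_neg (ne_of_lt (lt_trans hmAlt hjne))]
      omega
  · -- case 2 : c κ2 ≠ 0 and some c i ≠ 0 with i < κ2
    have hine : i < κ2 := by rw [Fin.lt_def]; omega
    have hBκ2 : d (Sum.inr (Sum.inl κ2)) = 0 := by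
      by_contra hB
      have hAall : ∀ m : Fin n, d (Sum.inl m) ≠ 0 → m = κ2 := by
        intro m hm
        rcases lt_trichotomy m κ2 with h | h | h
        · exact absurd (Or.inr (Or.inr (Or.inl
            ⟨m, κ2, by rw [Fin.lt_def] at h; omega, hκ2, hm, hB⟩))) hnf
        · exact h
        · rcases hni κ2 m h with h' | h'
          · exact absurd h' hm
          · exact absurd h' hB
      have hAκ2 : d (Sum.inl κ2) ≠ 0 := by
        have := hAall mA hmA
        rwa [this] at hmA
      by_cases hBi : d (Sum.inr (Sum.inl i)) = 0
      · have hAi : d (Sum.inl i) ≠ 0 := by unfold cdeg at hci; omega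
        exact absurd (Or.inr (Or.inr (Or.inl ⟨i, κ2, hilt, hκ2, hAi, hB⟩))) hnf
      · exact absurd (Or.inr (Or.inr (Or.inr ⟨i, κ2, hilt, hκ2, hAκ2, hBi⟩))) hnf
    have hAκ2 : d (Sum.inl κ2) ≠ 0 := by
      unfold cdeg at hc2; omega
    have hBlt : ∀ i' : Fin n, i'.1 < k → d (Sum.inr (Sum.inl i')) = 0 := by
      intro i' h'
      by_contra hB
      exact absurd (Or.inr (Or.inr (Or.inr ⟨i', κ2, h', hκ2, hAκ2, hB⟩))) hnf
    have hAi : d (Sum.inl i) ≠ 0 := by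
      have := hBlt i hilt
      unfold cdeg at hci; omega
    have hmBgt : κ2 < mB := by
      rcases lt_trichotomy mB κ2 with h | h | h
      · exact absurd (hBlt mB (by rw [Fin.lt_def] at h; omega)) hmB
      · rw [h] at hmB; exact absurd hBκ2 hmB
      · exact h
    refine ⟨i, mB, hAi, hmB, Or.inr (Or.inr (Or.inr ⟨i, κ2, hilt, hκ2, ?_, ?_⟩))⟩
    · rw [swapExp_inl, if_neg (ne_of_lt hine), if_neg (ne_of_gt hmBgt)]
      omega
    · rw [swapExp_inrl, if_neg (ne_of_gt (lt_trans hine hmBgt)), if_pos rfl]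
      omega


/-! ### Normal span and the decomposition -/

noncomputable def NS (K : Type*) [Field K] (n k : ℕ) :
    Submodule K (MvPolynomial (Fin n ⊕ Fin n ⊕ Unit) K) where
  carrier := {f | ∀ d, ¬ NormalE k d → coeff d f = 0}
  add_mem' := by
    intro a b ha hb d hd
    rw [coeff_add, ha d hd, hb d hd, add_zero]
  zero_mem' := by
    intro d _
    exact coeff_zero d
  smul_mem' := by
    intro c f hf d hd
    rw [MvPolynomial.coeff_smul, hf d hd, smul_zero]

noncomputable def JN (K : Type*) [Field K] (n k : ℕ) :
    Submodule K (MvPolynomial (Fin n ⊕ Fin n ⊕ Unit) K) :=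
  Submodule.restrictScalars K (JJ K n k) ⊔ NS K n k

lemma mem_JN_of_mem_JJ {f : MvPolynomial (Fin n ⊕ Fin n ⊕ Unit) K}
    (h : f ∈ JJ K n k) : f ∈ JN K n k :=
  Submodule.mem_sup_left h

lemma main_mem (hn : 2 ≤ n) (hk1 : 1 ≤ k) (hk2 : k ≤ n - 1) :
    ∀ (N : ℕ) (d : (Fin n ⊕ Fin n ⊕ Unit) →₀ ℕ), μd d < N →
      monomial d (1 : K) ∈ JN K n k := by
  intro N
  induction N with
  | zero => exact fun d h => absurd h (Nat.not_lt_zero _)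
  | succ N ih =>
    intro d hd
    by_cases he : d (Sum.inr (Sum.inr ())) ≠ 0
    · refine mem_JN_of_mem_JJ ?_
      have hle : Finsupp.single (Sum.inr (Sum.inr ()) : Fin n ⊕ Fin n ⊕ Unit) 1 ≤ d := by
        intro s
        rcases eq_or_ne s (Sum.inr (Sum.inr ())) with rfl | hs
        · simp [Finsupp.single_apply]; omega
        · simp [Finsupp.single_apply, Ne.symm hs]
      have hfac : monomial d (1 : K)
          = monomial (d - Finsupp.single (Sum.inr (Sum.inr ())) 1) 1 * zv K n := by
        rw [zv, X, monomial_mul, one_mul, tsub_add_cancel_of_le hle]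
      rw [hfac]
      exact Ideal.mul_mem_left _ _ z_mem
    · push_neg at he
      by_cases hfd : forbDiv k d
      · exact mem_JN_of_mem_JJ (forbDiv_mem hn hk1 hk2 d hfd)
      · by_cases hinv : ∃ i j : Fin n, i < j ∧ d (Sum.inl j) ≠ 0 ∧ d (Sum.inr (Sum.inl i)) ≠ 0
        · obtain ⟨i, j, hij, hAj, hBi⟩ := hinv
          have hc := swap_cong (K := K) (k := k) hn d j i hAj hBi
          have hlt : μd (swapExp d j i) < μd d := by
            have h1 := μ_swap_lt d i j hij hAj
            have h2 : i.1 < j.1 := hij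
            omega
          have hrec := ih (swapExp d j i) (by omega)
          have hsplit : monomial d (1 : K)
              = (monomial d 1 - monomial (swapExp d j i) 1) + monomial (swapExp d j i) 1 := by
            ring
          rw [hsplit]
          exact Submodule.add_mem _ (mem_JN_of_mem_JJ hc) hrec
        · have hni : noInv d := by
            intro i j hij
            by_contra h
            push_neg at h
            exact hinv ⟨i, j, hij, h.1, h.2⟩
          by_cases hcf : classForb k d
          · obtain ⟨u, w, hu, hw, hf⟩ := escape d hni hfd hcf
            have hc := swap_cong (K := K) (k := k) hn d u w hu hw
            have hm := forbDiv_mem (K := K) hn hk1 hk2 _ hf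
            have hsplit : monomial d (1 : K)
                = (monomial d 1 - monomial (swapExp d u w) 1) + monomial (swapExp d u w) 1 := by
              ring
            rw [hsplit]
            exact Submodule.add_mem _ (mem_JN_of_mem_JJ hc) (mem_JN_of_mem_JJ hm)
          · refine Submodule.mem_sup_right ?_
            intro d' hd'
            rw [coeff_monomial]
            rcases eq_or_ne d d' with rfl | hne
            · exact absurd ⟨he, hni, hcf⟩ hd'
            · rw [if_neg hne]

lemma all_mem_JN (hn : 2 ≤ n) (hk1 : 1 ≤ k) (hk2 : k ≤ n - 1)
    (f : MvPolynomial (Fin n ⊕ Fin n ⊕ Unit) K) : f ∈ JN K n k := by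
  nth_rewrite 1 [MvPolynomial.as_sum f]
  refine Submodule.sum_mem _ fun d _ => ?_
  have : monomial d (coeff d f) = coeff d f • monomial d (1 : K) := by
    rw [MvPolynomial.smul_monomial, smul_eq_mul, mul_one]
  rw [this]
  exact Submodule.smul_mem _ _ (main_mem hn hk1 hk2 (μd d + 1) d (Nat.lt_succ_self _))


/-! ### The component maps -/

noncomputable def gfun (sk tk : Bool) (W : Finset (Fin n)) :
    (Fin n ⊕ Fin n ⊕ Unit) → MvPolynomial (Unit ⊕ Unit ⊕ Fin n) K :=
  Sum.elim
    (fun i => if sk = true ∨ i ∈ W then 0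
      else X (Sum.inl ()) * X (Sum.inr (Sum.inr i)))
    (Sum.elim
      (fun i => if tk = true ∨ i ∈ W then 0
        else X (Sum.inr (Sum.inl ())) * X (Sum.inr (Sum.inr i)))
      (fun _ => 0))

noncomputable def φm (K : Type*) [Field K] (n : ℕ) (sk tk : Bool) (W : Finset (Fin n)) :
    MvPolynomial (Fin n ⊕ Fin n ⊕ Unit) K →ₐ[K] MvPolynomial (Unit ⊕ Unit ⊕ Fin n) K :=
  aeval (gfun sk tk W)

lemma gprod_zero (sk tk : Bool) (W : Finset (Fin n)) (a b : Fin n)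
    (h : sk = true ∨ tk = true ∨ a ∈ W ∨ b ∈ W) :
    gfun (K := K) sk tk W (Sum.inl a) * gfun sk tk W (Sum.inr (Sum.inl b)) = 0 := by
  rcases h with h | h | h | h
  · simp [gfun, h]
  · simp [gfun, h]
  · simp [gfun, h]
  · simp [gfun, h]

lemma gdiff_zero (sk tk : Bool) (W : Finset (Fin n)) (a b : Fin n) :
    gfun (K := K) sk tk W (Sum.inl a) * gfun sk tk W (Sum.inr (Sum.inl b))
      - gfun sk tk W (Sum.inl b) * gfun sk tk W (Sum.inr (Sum.inl a)) = 0 := by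
  by_cases hsk : sk = true
  · simp [gfun, hsk]
  · by_cases htk : tk = true
    · simp [gfun, htk]
    · by_cases ha : a ∈ W
      · simp [gfun, ha]
      · by_cases hb : b ∈ W
        · simp [gfun, hb]
        · simp only [gfun, Sum.elim_inl, Sum.elim_inr, if_neg (by simp [hsk, ha] : ¬(sk = true ∨ a ∈ W)),
            if_neg (by simp [hsk, hb] : ¬(sk = true ∨ b ∈ W)),
            if_neg (by simp [htk, ha] : ¬(tk = true ∨ a ∈ W)),
            if_neg (by simp [htk, hb] : ¬(tk = true ∨ b ∈ W))]
          ring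

lemma JJ_ker (hn : 2 ≤ n) (hk1 : 1 ≤ k) (hk2 : k ≤ n - 1) (sk tk : Bool) (W : Finset (Fin n))
    (h2 : ∀ j : Fin n, k ≤ j.1 →
      (sk = true ∨ tk = true ∨ (⟨k - 1, by omega⟩ : Fin n) ∈ W ∨ j ∈ W))
    (h3 : ∀ i : Fin n, i.1 < k →
      (sk = true ∨ tk = true ∨ i ∈ W ∨ (⟨k, by omega⟩ : Fin n) ∈ W)) :
    ∀ f ∈ JJ K n k, φm K n sk tk W f = 0 := by
  have hle : JJ K n k ≤ RingHom.ker (φm K n sk tk W) := by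
    rw [JJ]
    apply sup_le
    · rw [LkIdeal]
      rw [Ideal.span_le]
      rintro f ((⟨i, j, hi, hij, hjn, rfl⟩ | ⟨j, hj1, hj2, rfl⟩) | ⟨i, hi1, hi2, rfl⟩)
      · rw [SetLike.mem_coe, RingHom.mem_ker]
        rw [xv, dif_pos ⟨by omega, by omega⟩, xv, dif_pos ⟨by omega, by omega⟩,
          yv, dif_pos ⟨by omega, by omega⟩, yv, dif_pos ⟨by omega, by omega⟩]
        rw [map_sub, map_mul, map_mul, φm, aeval_X, aeval_X, aeval_X, aeval_X]
        exact gdiff_zero sk tk W _ _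
      · rw [SetLike.mem_coe, RingHom.mem_ker]
        rw [xv, dif_pos ⟨by omega, by omega⟩, xv, dif_pos ⟨by omega, by omega⟩,
          yv, dif_pos ⟨by omega, by omega⟩, zv]
        rw [map_sub, map_mul, map_mul, φm, aeval_X, aeval_X, aeval_X, aeval_X]
        have hz : gfun (K := K) sk tk W (Sum.inr (Sum.inr ())) = 0 := rfl
        rw [hz, zero_mul]
        have : (⟨k - 1, by omega⟩ : Fin n) = (⟨k - 1, by omega⟩ : Fin n) := rfl
        rw [zero_sub, neg_eq_zero]
        exact gprod_zero sk tk W _ _ (by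
          have := h2 ⟨j - 1, by omega⟩ (by simp; omega)
          exact this)
      · rw [SetLike.mem_coe, RingHom.mem_ker]
        rw [xv, dif_pos ⟨by omega, by omega⟩,
          yv, dif_pos ⟨by omega, by omega⟩, yv, dif_pos ⟨by omega, by omega⟩, zv]
        rw [map_sub, map_mul, map_mul, φm, aeval_X, aeval_X, aeval_X, aeval_X]
        have hz : gfun (K := K) sk tk W (Sum.inr (Sum.inr ())) = 0 := rfl
        rw [hz, zero_mul, zero_sub, neg_eq_zero]
        exact gprod_zero sk tk W _ _ (by
          have := h3 ⟨i - 1, by omega⟩ (by simp; omega)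
          rcases this with h | h | h | h
          · exact Or.inl h
          · exact Or.inr (Or.inl h)
          · exact Or.inr (Or.inr (Or.inl h))
          · exact Or.inr (Or.inr (Or.inr h)))
    · rw [Ideal.span_le]
      rintro f rfl
      rw [SetLike.mem_coe, RingHom.mem_ker, zv, φm, aeval_X]
      rfl
  intro f hf
  exact hle hf


/-! ### Images of monomials -/

noncomputable def ψe (d : (Fin n ⊕ Fin n ⊕ Unit) →₀ ℕ) : (Unit ⊕ Unit ⊕ Fin n) →₀ ℕ :=
  Finsupp.equivFunOnFinite.symm
    (Sum.elim (fun _ => ∑ t : Fin n, d (Sum.inl t))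
      (Sum.elim (fun _ => ∑ t : Fin n, d (Sum.inr (Sum.inl t))) (fun i => cdeg d i)))

lemma ψe_apply_s (d : (Fin n ⊕ Fin n ⊕ Unit) →₀ ℕ) :
    ψe d (Sum.inl ()) = ∑ t : Fin n, d (Sum.inl t) := rfl

lemma ψe_apply_t (d : (Fin n ⊕ Fin n ⊕ Unit) →₀ ℕ) :
    ψe d (Sum.inr (Sum.inl ())) = ∑ t : Fin n, d (Sum.inr (Sum.inl t)) := rfl

lemma ψe_apply_v (d : (Fin n ⊕ Fin n ⊕ Unit) →₀ ℕ) (i : Fin n) :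
    ψe d (Sum.inr (Sum.inr i)) = cdeg d i := rfl

lemma phi_mono_zero (sk tk : Bool) (W : Finset (Fin n)) (d : (Fin n ⊕ Fin n ⊕ Unit) →₀ ℕ)
    (c : K) (hkill : ∃ u, d u ≠ 0 ∧ gfun (K := K) sk tk W u = 0) :
    φm K n sk tk W (monomial d c) = 0 := by
  rw [φm, aeval_monomial]
  obtain ⟨u, hu, hg⟩ := hkill
  have hprod : (d.prod fun u e => gfun (K := K) sk tk W u ^ e) = 0 :=
    Finset.prod_eq_zero (Finsupp.mem_support_iff.2 hu)
      (by show gfun (K := K) sk tk W u ^ d u = 0; rw [hg]; exact zero_pow hu)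
  rw [hprod, mul_zero]

lemma phi_mono_image (sk tk : Bool) (W : Finset (Fin n)) (d : (Fin n ⊕ Fin n ⊕ Unit) →₀ ℕ)
    (he : d (Sum.inr (Sum.inr ())) = 0)
    (hs : ∀ i : Fin n, d (Sum.inl i) ≠ 0 → ¬(sk = true ∨ i ∈ W))
    (ht : ∀ i : Fin n, d (Sum.inr (Sum.inl i)) ≠ 0 → ¬(tk = true ∨ i ∈ W)) :
    φm K n sk tk W (monomial d 1) = monomial (ψe d) 1 := by
  rw [φm, aeval_monomial, map_one, one_mul]
  rw [Finsupp.prod_fintype _ _ (fun u => pow_zero _)]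
  rw [Fintype.prod_sum_type]
  rw [Fintype.prod_sum_type]
  have hunit : ∀ u : Unit, gfun (K := K) sk tk W (Sum.inr (Sum.inr u)) ^ d (Sum.inr (Sum.inr u)) = 1 := by
    intro u
    cases u
    rw [he, pow_zero]
  rw [Fintype.prod_unique (fun u : Unit => gfun (K := K) sk tk W (Sum.inr (Sum.inr u)) ^ d (Sum.inr (Sum.inr u)))]
  rw [hunit, mul_one]
  have ex : ∀ i : Fin n, gfun (K := K) sk tk W (Sum.inl i) ^ d (Sum.inl i)
      = (X (Sum.inl ()) * X (Sum.inr (Sum.inr i))) ^ d (Sum.inl i) := by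
    intro i
    by_cases hA : d (Sum.inl i) = 0
    · rw [hA, pow_zero, pow_zero]
    · simp only [gfun, Sum.elim_inl]
      rw [if_neg (hs i hA)]
  have ey : ∀ i : Fin n, gfun (K := K) sk tk W (Sum.inr (Sum.inl i)) ^ d (Sum.inr (Sum.inl i))
      = (X (Sum.inr (Sum.inl ())) * X (Sum.inr (Sum.inr i))) ^ d (Sum.inr (Sum.inl i)) := by
    intro i
    by_cases hB : d (Sum.inr (Sum.inl i)) = 0
    · rw [hB, pow_zero, pow_zero]
    · simp only [gfun, Sum.elim_inl, Sum.elim_inr]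
      rw [if_neg (ht i hB)]
  rw [Finset.prod_congr rfl fun i _ => ex i, Finset.prod_congr rfl fun i _ => ey i]
  -- now compute the right-hand side
  have hrhs : (monomial (ψe d) (1 : K))
      = X (Sum.inl ()) ^ (∑ t : Fin n, d (Sum.inl t))
        * X (Sum.inr (Sum.inl ())) ^ (∑ t : Fin n, d (Sum.inr (Sum.inl t)))
        * ∏ i : Fin n, X (Sum.inr (Sum.inr i)) ^ cdeg d i := by
    rw [← prod_X_pow_eq_monomial]
    rw [Finset.prod_subset (Finset.subset_univ (ψe d).support)
      (fun u _ hu => by rw [Finsupp.notMem_support_iff.1 hu, pow_zero])]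
    rw [Fintype.prod_sum_type, Fintype.prod_sum_type]
    rw [Fintype.prod_unique (fun u : Unit => (X (Sum.inl u) : MvPolynomial (Unit ⊕ Unit ⊕ Fin n) K) ^ ψe d (Sum.inl u))]
    rw [Fintype.prod_unique (fun u : Unit => (X (Sum.inr (Sum.inl u)) : MvPolynomial (Unit ⊕ Unit ⊕ Fin n) K) ^ ψe d (Sum.inr (Sum.inl u)))]
    rw [ψe_apply_s, ψe_apply_t]
    rw [Finset.prod_congr rfl fun i _ => by rw [ψe_apply_v]]
    ring
  rw [hrhs]
  simp only [mul_pow, Finset.prod_mul_distrib, Finset.prod_pow_eq_pow_sum]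
  have hv : ∀ i : Fin n,
      (X (Sum.inr (Sum.inr i)) : MvPolynomial (Unit ⊕ Unit ⊕ Fin n) K) ^ cdeg d i
        = X (Sum.inr (Sum.inr i)) ^ d (Sum.inl i) * X (Sum.inr (Sum.inr i)) ^ d (Sum.inr (Sum.inl i)) := by
    intro i
    rw [← pow_add]
    rfl
  rw [Finset.prod_congr rfl fun i _ => hv i, Finset.prod_mul_distrib]
  ring

/-! ### Uniqueness of inversion-free splittings -/

lemma noInv_unique_aux (A B A' B' : Fin n → ℕ)
    (h2 : ∀ i j : Fin n, i < j → A' j = 0 ∨ B' i = 0)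
    (hc : ∀ i, A i + B i = A' i + B' i)
    (hs : ∑ i, A i = ∑ i, A' i)
    (i₀ : Fin n) (hmin : ∀ t, t < i₀ → A t = A' t) (hgt : A' i₀ < A i₀) : False := by
  classical
  set s := Finset.univ.filter (fun t : Fin n => i₀ ≤ t) with hsdef
  have hfil : ∀ F : Fin n → ℕ,
      ∑ i, F i = (∑ i ∈ Finset.univ.filter (fun t : Fin n => t < i₀), F i) + ∑ i ∈ s, F i := by
    intro F
    have hfe : Finset.filter (fun x : Fin n => ¬x < i₀) Finset.univ
        = Finset.filter (fun t : Fin n => i₀ ≤ t) Finset.univ := by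
      ext t
      simp [not_lt]
    rw [hsdef, ← Finset.sum_filter_add_sum_filter_not Finset.univ (fun t : Fin n => t < i₀) F,
      hfe]
  have hpre : ∑ i ∈ Finset.univ.filter (fun t : Fin n => t < i₀), A i
      = ∑ i ∈ Finset.univ.filter (fun t : Fin n => t < i₀), A' i := by
    refine Finset.sum_congr rfl fun t ht => hmin t ?_
    simpa using ht
  have hA := hfil A
  have hA' := hfil A'
  have hs2 : ∑ i ∈ s, A i = ∑ i ∈ s, A' i := by omega
  have hex : ∃ j ∈ s, A j < A' j := by
    by_contra hcon
    push_neg at hcon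
    have : ∑ i ∈ s, A' i < ∑ i ∈ s, A i :=
      Finset.sum_lt_sum hcon ⟨i₀, by simp [hsdef], hgt⟩
    omega
  obtain ⟨j, hjs, hj⟩ := hex
  have hij : i₀ < j := by
    have hle : i₀ ≤ j := by simpa [hsdef] using hjs
    rcases eq_or_lt_of_le hle with rfl | h
    · omega
    · exact h
  have hB' : B' i₀ ≠ 0 := by have := hc i₀; omega
  have hA'j : A' j ≠ 0 := by omega
  rcases h2 i₀ j hij with h | h
  · exact hA'j h
  · exact hB' h

lemma noInv_unique (A B A' B' : Fin n → ℕ)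
    (h1 : ∀ i j : Fin n, i < j → A j = 0 ∨ B i = 0)
    (h2 : ∀ i j : Fin n, i < j → A' j = 0 ∨ B' i = 0)
    (hc : ∀ i, A i + B i = A' i + B' i)
    (hs : ∑ i, A i = ∑ i, A' i) : ∀ i, A i = A' i := by
  classical
  by_contra hcon
  push_neg at hcon
  obtain ⟨i, hi⟩ := hcon
  set D := Finset.univ.filter (fun t : Fin n => A t ≠ A' t) with hD
  have hDne : D.Nonempty := ⟨i, by simp [hD, hi]⟩
  set i₀ := D.min' hDne with hi₀def
  have hi₀ : A i₀ ≠ A' i₀ := by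
    have := D.min'_mem hDne
    simpa [hD] using this
  have hmin : ∀ t, t < i₀ → A t = A' t := by
    intro t ht
    by_contra h
    have : i₀ ≤ t := D.min'_le t (by simp [hD, h])
    exact absurd ht (not_lt.2 this)
  rcases lt_or_gt_of_ne hi₀ with h | h
  · exact noInv_unique_aux A' B' A B h1 (fun i => (hc i).symm) hs.symm i₀
      (fun t ht => (hmin t ht).symm) h
  · exact noInv_unique_aux A B A' B' h2 hc hs i₀ hmin h

lemma normal_inj (d d' : (Fin n ⊕ Fin n ⊕ Unit) →₀ ℕ)
    (hd : NormalE k d) (hd' : NormalE k d') (hψ : ψe d = ψe d') : d = d' := by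
  have happ : ∀ u, ψe d u = ψe d' u := fun u => by rw [hψ]
  have hp : ∑ t : Fin n, d (Sum.inl t) = ∑ t : Fin n, d' (Sum.inl t) := happ (Sum.inl ())
  have hcd : ∀ i, cdeg d i = cdeg d' i := fun i => happ (Sum.inr (Sum.inr i))
  have hA : ∀ i, d (Sum.inl i) = d' (Sum.inl i) := by
    refine noInv_unique (fun i => d (Sum.inl i)) (fun i => d (Sum.inr (Sum.inl i)))
      (fun i => d' (Sum.inl i)) (fun i => d' (Sum.inr (Sum.inl i)))
      hd.2.1 hd'.2.1 (fun i => ?_) hp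
    have hthis := hcd i
    unfold cdeg at hthis
    show d (Sum.inl i) + d (Sum.inr (Sum.inl i)) = d' (Sum.inl i) + d' (Sum.inr (Sum.inl i))
    omega
  have hB : ∀ i, d (Sum.inr (Sum.inl i)) = d' (Sum.inr (Sum.inl i)) := by
    intro i
    have h1 := hcd i
    have h2 := hA i
    unfold cdeg at h1
    omega
  ext u
  rcases u with t | t | t
  · exact hA t
  · exact hB t
  · cases t
    rw [hd.1, hd'.1]


/-! ### Coefficient extraction -/

lemma coeff_phi_eq (sk tk : Bool) (W : Finset (Fin n))
    (r : MvPolynomial (Fin n ⊕ Fin n ⊕ Unit) K) (hr : r ∈ NS K n k)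
    (d : (Fin n ⊕ Fin n ⊕ Unit) →₀ ℕ) (hd : NormalE k d)
    (hs : ∀ i : Fin n, d (Sum.inl i) ≠ 0 → ¬(sk = true ∨ i ∈ W))
    (ht : ∀ i : Fin n, d (Sum.inr (Sum.inl i)) ≠ 0 → ¬(tk = true ∨ i ∈ W)) :
    coeff (ψe d) (φm K n sk tk W r) = coeff d r := by
  classical
  nth_rewrite 1 [MvPolynomial.as_sum r]
  rw [map_sum, MvPolynomial.coeff_sum]
  have hterm : ∀ b ∈ r.support, b ≠ d →
      coeff (ψe d) (φm K n sk tk W (monomial b (coeff b r))) = 0 := by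
    intro b _ hbd
    by_cases hnb : NormalE k b
    · by_cases hkill : ∃ u, b u ≠ 0 ∧ gfun (K := K) sk tk W u = 0
      · rw [phi_mono_zero sk tk W b _ hkill, coeff_zero]
      · push_neg at hkill
        have hsb : ∀ i : Fin n, b (Sum.inl i) ≠ 0 → ¬(sk = true ∨ i ∈ W) := by
          intro i hbi hcond
          exact hkill (Sum.inl i) hbi (by simp only [gfun, Sum.elim_inl, if_pos hcond])
        have htb : ∀ i : Fin n, b (Sum.inr (Sum.inl i)) ≠ 0 → ¬(tk = true ∨ i ∈ W) := by
          intro i hbi hcond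
          exact hkill (Sum.inr (Sum.inl i)) hbi
            (by simp only [gfun, Sum.elim_inl, Sum.elim_inr, if_pos hcond])
        have hbsm : monomial b (coeff b r) = coeff b r • monomial b (1 : K) := by
          rw [MvPolynomial.smul_monomial, smul_eq_mul, mul_one]
        rw [hbsm, map_smul, phi_mono_image sk tk W b hnb.1 hsb htb,
          MvPolynomial.coeff_smul, coeff_monomial,
          if_neg (fun h => hbd (normal_inj b d hnb hd h)), smul_zero]
    · rw [hr b hnb]
      simp
  by_cases hdm : d ∈ r.support
  · rw [Finset.sum_eq_single_of_mem d hdm hterm]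
    have hdsm : monomial d (coeff d r) = coeff d r • monomial d (1 : K) := by
      rw [MvPolynomial.smul_monomial, smul_eq_mul, mul_one]
    rw [hdsm, map_smul, phi_mono_image sk tk W d hd.1 hs ht,
      MvPolynomial.coeff_smul, coeff_monomial, if_pos rfl, smul_eq_mul, mul_one]
  · rw [Finset.sum_eq_zero (fun b hb => hterm b hb (fun h => hdm (h ▸ hb))),
      MvPolynomial.notMem_support_iff.1 hdm]

lemma ns_zero (hn : 2 ≤ n) (hk1 : 1 ≤ k) (hk2 : k ≤ n - 1)
    (r : MvPolynomial (Fin n ⊕ Fin n ⊕ Unit) K) (hr : r ∈ NS K n k)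
    (h1 : φm K n true false ∅ r = 0)
    (h2 : φm K n false true ∅ r = 0)
    (h3 : φm K n false false (Finset.univ.filter fun i : Fin n => i.1 = k - 1 ∨ i.1 = k) r = 0)
    (h4 : φm K n false false (Finset.univ.filter fun i : Fin n => i.1 < k) r = 0)
    (h5 : φm K n false false (Finset.univ.filter fun i : Fin n => k ≤ i.1) r = 0) :
    r = 0 := by
  classical
  apply MvPolynomial.ext
  intro d
  rw [coeff_zero]
  by_cases hd : NormalE k d
  swap
  · exact hr d hd
  obtain ⟨he, hni, hcf⟩ := hd
  by_cases hp : ∀ i : Fin n, d (Sum.inl i) = 0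
  · rw [← coeff_phi_eq true false ∅ r hr d ⟨he, hni, hcf⟩
      (fun i hi => absurd (hp i) hi) (fun i _ => by simp), h1, coeff_zero]
  · push_neg at hp
    obtain ⟨iA, hiA⟩ := hp
    by_cases hq : ∀ i : Fin n, d (Sum.inr (Sum.inl i)) = 0
    · rw [← coeff_phi_eq false true ∅ r hr d ⟨he, hni, hcf⟩
        (fun i _ => by simp) (fun i hi => absurd (hq i) hi), h2, coeff_zero]
    · push_neg at hq
      obtain ⟨iB, hiB⟩ := hq
      have hdis : ¬(((∃ i : Fin n, i.1 = k - 1 ∧ cdeg d i ≠ 0) ∧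
            (∃ j : Fin n, k - 1 < j.1 ∧ cdeg d j ≠ 0)) ∨
          ((∃ i : Fin n, i.1 = k ∧ cdeg d i ≠ 0) ∧ (∃ i : Fin n, i.1 < k ∧ cdeg d i ≠ 0))) :=
        fun h => hcf ⟨⟨iA, hiA⟩, ⟨iB, hiB⟩, h⟩
      push_neg at hdis
      obtain ⟨hdis1, hdis2⟩ := hdis
      have hnotW : ∀ (W : Finset (Fin n)), (∀ i : Fin n, cdeg d i ≠ 0 → i ∉ W) →
          (∀ i : Fin n, d (Sum.inl i) ≠ 0 → ¬(false = true ∨ i ∈ W)) ∧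
          (∀ i : Fin n, d (Sum.inr (Sum.inl i)) ≠ 0 → ¬(false = true ∨ i ∈ W)) := by
        intro W hW
        constructor
        · rintro i hi (hff | hiW)
          · exact absurd hff (by simp)
          · exact hW i (by unfold cdeg; omega) hiW
        · rintro i hi (hff | hiW)
          · exact absurd hff (by simp)
          · exact hW i (by unfold cdeg; omega) hiW
      by_cases hck1 : cdeg d (⟨k - 1, by omega⟩ : Fin n) = 0
      · by_cases hck2 : cdeg d (⟨k, by omega⟩ : Fin n) = 0
        · -- component 3
          have hW := hnotW (Finset.univ.filter fun i : Fin n => i.1 = k - 1 ∨ i.1 = k) ?_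
          · rw [← coeff_phi_eq false false _ r hr d ⟨he, hni, hcf⟩ hW.1 hW.2, h3, coeff_zero]
          · intro i hci hiW
            simp only [Finset.mem_filter, Finset.mem_univ, true_and] at hiW
            rcases hiW with h | h
            · exact hci (by rw [show i = (⟨k - 1, by omega⟩ : Fin n) from Fin.ext h]; exact hck1)
            · exact hci (by rw [show i = (⟨k, by omega⟩ : Fin n) from Fin.ext h]; exact hck2)
        · -- component 4
          have hlow : ∀ i : Fin n, i.1 < k → cdeg d i = 0 :=
            hdis2 ⟨⟨k, by omega⟩, rfl, hck2⟩
          have hW := hnotW (Finset.univ.filter fun i : Fin n => i.1 < k) ?_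
          · rw [← coeff_phi_eq false false _ r hr d ⟨he, hni, hcf⟩ hW.1 hW.2, h4, coeff_zero]
          · intro i hci hiW
            simp only [Finset.mem_filter, Finset.mem_univ, true_and] at hiW
            exact hci (hlow i hiW)
      · -- component 5
        have hhigh : ∀ j : Fin n, k - 1 < j.1 → cdeg d j = 0 :=
          hdis1 ⟨⟨k - 1, by omega⟩, rfl, hck1⟩
        have hW := hnotW (Finset.univ.filter fun i : Fin n => k ≤ i.1) ?_
        · rw [← coeff_phi_eq false false _ r hr d ⟨he, hni, hcf⟩ hW.1 hW.2, h5, coeff_zero]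
        · intro i hci hiW
          simp only [Finset.mem_filter, Finset.mem_univ, true_and] at hiW
          exact hci (hhigh i (by omega))

lemma phi_r_zero (hn : 2 ≤ n) (hk1 : 1 ≤ k) (hk2 : k ≤ n - 1)
    (sk tk : Bool) (W : Finset (Fin n))
    (hker : ∀ f ∈ JJ K n k, φm K n sk tk W f = 0)
    {f g r : MvPolynomial (Fin n ⊕ Fin n ⊕ Unit) K} {m : ℕ} (hm0 : m ≠ 0)
    (hmJJ : f ^ m ∈ JJ K n k) (hgJJ : g ∈ JJ K n k) (hfgr : f = g + r) :
    φm K n sk tk W r = 0 := by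
  have hfm : φm K n sk tk W f = 0 := by
    have h0 := hker _ hmJJ
    rw [map_pow] at h0
    exact (pow_eq_zero_iff hm0).1 h0
  have : r = f - g := by rw [hfgr]; ring
  rw [this, map_sub, hfm, hker g hgJJ, sub_zero]

end LkAux

/-- **Corollary.** For every `1 ≤ k ≤ n−1`, the ideal `I_{L_k} + (z)` is radical. -/
theorem LkIdeal_sup_z_isRadical (K : Type*) [Field K] (n k : ℕ)
    (hn : 2 ≤ n) (hk1 : 1 ≤ k) (hk2 : k ≤ n - 1) :
    (LkIdeal K n k ⊔ Ideal.span {zv K n}).IsRadical := by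
  intro f hf
  obtain ⟨m, hm⟩ := hf
  have hmJJ : f ^ m ∈ LkAux.JJ K n k := hm
  show f ∈ LkAux.JJ K n k
  by_cases hm0 : m = 0
  · subst hm0
    rw [pow_zero] at hmJJ
    have htop := (Ideal.eq_top_iff_one _).2 hmJJ
    rw [htop]
    trivial
  · have hker1 := LkAux.JJ_ker (K := K) hn hk1 hk2 true false ∅
      (fun j _ => Or.inl rfl) (fun i _ => Or.inl rfl)
    have hker2 := LkAux.JJ_ker (K := K) hn hk1 hk2 false true ∅
      (fun j _ => Or.inr (Or.inl rfl)) (fun i _ => Or.inr (Or.inl rfl))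
    have hker3 := LkAux.JJ_ker (K := K) hn hk1 hk2 false false
      (Finset.univ.filter fun i : Fin n => i.1 = k - 1 ∨ i.1 = k)
      (fun j _ => Or.inr (Or.inr (Or.inl (by simp))))
      (fun i _ => Or.inr (Or.inr (Or.inr (by simp))))
    have hker4 := LkAux.JJ_ker (K := K) hn hk1 hk2 false false
      (Finset.univ.filter fun i : Fin n => i.1 < k)
      (fun j _ => Or.inr (Or.inr (Or.inl (by simp; omega))))
      (fun i hi => Or.inr (Or.inr (Or.inl (by simp [hi]))))
    have hker5 := LkAux.JJ_ker (K := K) hn hk1 hk2 false false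
      (Finset.univ.filter fun i : Fin n => k ≤ i.1)
      (fun j hj => Or.inr (Or.inr (Or.inr (by simp [hj]))))
      (fun i _ => Or.inr (Or.inr (Or.inr (by simp))))
    obtain ⟨g, hg, r, hr, hfgr⟩ := Submodule.mem_sup.1 (LkAux.all_mem_JN hn hk1 hk2 f)
    have hgJJ : g ∈ LkAux.JJ K n k := hg
    have hfgr' : f = g + r := hfgr.symm
    have hrz : r = 0 := by
      refine LkAux.ns_zero hn hk1 hk2 r hr ?_ ?_ ?_ ?_ ?_
      · exact LkAux.phi_r_zero hn hk1 hk2 _ _ _ hker1 hm0 hmJJ hgJJ hfgr'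
      · exact LkAux.phi_r_zero hn hk1 hk2 _ _ _ hker2 hm0 hmJJ hgJJ hfgr'
      · exact LkAux.phi_r_zero hn hk1 hk2 _ _ _ hker3 hm0 hmJJ hgJJ hfgr'
      · exact LkAux.phi_r_zero hn hk1 hk2 _ _ _ hker4 hm0 hmJJ hgJJ hfgr'
      · exact LkAux.phi_r_zero hn hk1 hk2 _ _ _ hker5 hm0 hmJJ hgJJ hfgr'
    rw [hfgr', hrz, add_zero]
    exact hgJJ
end
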